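/- arXiv:math/0105005 — 9 statements merged into one kernel-verified Lean document; each statement's English description precedes it below -/
import Mathlib

section
/- For any prime p and any natural numbers N and ℓ with 1 ≤ ℓ ≤ N+1, the binomial coefficient C(p^N, ℓ) is divisible by p^(N+1-ℓ). -/
theorem Nat.pow_sub_factorization_dvd_choose_prime_pow {p n k : ℕ} (hp : p.Prime) (hk : k ≠ 0) :
    p ^ (n - k.factorization p) ∣ (p ^ n).choose k := by
  rcases le_or_gt k (p ^ n) with hkn | hnk
  · rw [← Nat.factorization_choose_prime_pow hp hkn hk]
    exact Nat.ordProj_dvd _ p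
  · rw [Nat.choose_eq_zero_of_lt hnk]
    exact dvd_zero _

theorem stmt0_general (p N ℓ : ℕ) (hp : p.Prime) (h1 : 1 ≤ ℓ) :
    p ^ (N + 1 - ℓ) ∣ (p ^ N).choose ℓ := by
  have hℓ : ℓ ≠ 0 := by omega
  have hval : ℓ.factorization p < ℓ := Nat.factorization_lt p hℓ
  exact (pow_dvd_pow p (by omega)).trans (Nat.pow_sub_factorization_dvd_choose_prime_pow hp hℓ)

/-- For any prime `p` and naturals `N`, `ℓ` with `1 ≤ ℓ ≤ N+1`, the binomial
coefficient `C(p^N, ℓ)` is divisible by `p^(N+1-ℓ)`. -/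
theorem stmt0 (p N ℓ : ℕ) (hp : p.Prime) (h1 : 1 ≤ ℓ) (h2 : ℓ ≤ N + 1) :
    p ^ (N + 1 - ℓ) ∣ (p ^ N).choose ℓ :=
  stmt0_general p N ℓ hp h1
end

section
/- Let p be a prime, a a positive integer with base-(p-1) decomposition a = i + ℓ(p-1) where 1 ≤ i ≤ p-1 and ℓ ≥ 0, and k ≡ a (mod p-1) a positive integer. Define D_k(a) = (-1)^(a+(k-a)/(p-1)) · a·(k+(k-a)/(p-1)-1)! / (k!·((k-a)/(p-1))!), a rational number which is p-integral. If ℓ = 0 then ord_p(D_k(a)) = (s_p(k) - i)/(p-1); if ℓ ≥ 1 then ord_p(D_k(a)) ≥ (s_p(k) - i)/(p-1) - (ℓ - 1). -/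
-- digit sum of p*t + r, r < p
lemma sumdig_mul_add {p : ℕ} (hp : 1 < p) (t r : ℕ) (hr : r < p) :
    (Nat.digits p (p * t + r)).sum = (Nat.digits p t).sum + r := by
  rcases Nat.eq_zero_or_pos t with ht | ht
  · subst ht
    rcases Nat.eq_zero_or_pos r with hr0 | hr0
    · simp [hr0]
    · simp [Nat.digits_of_lt p r (by omega) hr]
  · have hpos : 0 < p * t + r := by
      have : 0 < p * t := Nat.mul_pos (by omega) ht
      omega
    rw [Nat.digits_def' hp hpos]
    have h1 : (p * t + r) % p = r := by
      rw [Nat.mul_add_mod, Nat.mod_eq_of_lt hr]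
    have h2 : (p * t + r) / p = t := by
      rw [Nat.mul_add_div (by omega : 0 < p), Nat.div_eq_of_lt hr]
      omega
    rw [h1, h2, List.sum_cons]
    omega

-- Legendre, integer form
lemma legendreZ {p : ℕ} [Fact p.Prime] (n : ℕ) :
    ((p : ℤ) - 1) * (padicValNat p n.factorial : ℤ) =
      (n : ℤ) - ((Nat.digits p n).sum : ℤ) := by
  have h := sub_one_mul_padicValNat_factorial (p := p) n
  have h2 := Nat.digit_sum_le p n
  have hp2 : 2 ≤ p := (Fact.out : p.Prime).two_le
  rw [show ((p:ℤ) - 1) = ((p - 1 : ℕ) : ℤ) by omega, ← Nat.cast_mul, h,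
    Nat.cast_sub h2]

-- subadditivity of digit sum
lemma sumdig_add_le {p : ℕ} [Fact p.Prime] (x y : ℕ) :
    ((Nat.digits p (x + y)).sum : ℤ) ≤ (Nat.digits p x).sum + (Nat.digits p y).sum := by
  have hf : (x + y).choose y * x.factorial * y.factorial = (x + y).factorial :=
    Nat.add_choose_mul_factorial_mul_factorial x y
  have hC0 : (x + y).choose y ≠ 0 := Nat.ne_of_gt (Nat.choose_pos (Nat.le_add_left y x))
  have valN : padicValNat p ((x + y).factorial) =
      padicValNat p ((x + y).choose y) + padicValNat p x.factorial
        + padicValNat p y.factorial := by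
    rw [← hf, padicValNat.mul (Nat.mul_ne_zero hC0 (Nat.factorial_ne_zero x))
      (Nat.factorial_ne_zero y), padicValNat.mul hC0 (Nat.factorial_ne_zero x)]
  have hvalZ : ((p:ℤ) - 1) * (padicValNat p ((x + y).factorial) : ℤ) =
      ((p:ℤ) - 1) * (padicValNat p ((x + y).choose y) : ℤ)
        + ((p:ℤ) - 1) * (padicValNat p x.factorial : ℤ)
        + ((p:ℤ) - 1) * (padicValNat p y.factorial : ℤ) := by
    rw [valN, Nat.cast_add, Nat.cast_add]; ring
  have l1 := legendreZ (p := p) (x + y)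
  have l2 := legendreZ (p := p) x
  have l3 := legendreZ (p := p) y
  have hp2 : 2 ≤ p := (Fact.out : p.Prime).two_le
  have hp2' : (2:ℤ) ≤ (p:ℤ) := by exact_mod_cast hp2
  have hnn : (0:ℤ) ≤ ((p:ℤ) - 1) * (padicValNat p ((x + y).choose y) : ℤ) :=
    mul_nonneg (by linarith) (by positivity)
  have hxy : ((x + y : ℕ) : ℤ) = (x:ℤ) + (y:ℤ) := by omega
  rw [hxy] at l1
  linarith [l1, l2, l3, hvalZ, hnn]

-- borrow lemma: s(a-1) + 1 ≤ s(a) + (p-1) val(a)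
lemma sumdig_pred {p : ℕ} [Fact p.Prime] : ∀ a : ℕ, 1 ≤ a →
    ((Nat.digits p (a - 1)).sum : ℤ) + 1 ≤
      ((Nat.digits p a).sum : ℤ) + ((p:ℤ) - 1) * (padicValNat p a : ℤ) := by
  have hp : p.Prime := Fact.out
  have hp2 : 2 ≤ p := hp.two_le
  have hp2' : (2:ℤ) ≤ (p:ℤ) := by exact_mod_cast hp2
  intro a
  induction a using Nat.strong_induction_on with
  | _ a IH =>
  intro ha1
  by_cases hd : p ∣ a
  · obtain ⟨m, rfl⟩ := hd
    have hm1 : 1 ≤ m := by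
      rcases Nat.eq_zero_or_pos m with h | h
      · subst h; simp at ha1
      · exact h
    have hmlt : m < p * m := by nlinarith
    have hms : p * (m - 1) = p * m - p := Nat.mul_sub_one p m
    have hpm : p ≤ p * m := Nat.le_mul_of_pos_right p hm1
    have e1 : p * m - 1 = p * (m - 1) + (p - 1) := by omega
    have e2 : (Nat.digits p (p * m - 1)).sum = (Nat.digits p (m - 1)).sum + (p - 1) := by
      rw [e1]
      exact sumdig_mul_add (by omega) (m - 1) (p - 1) (by omega)
    have e3 : (Nat.digits p (p * m)).sum = (Nat.digits p m).sum := by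
      have := sumdig_mul_add (p := p) (by omega) m 0 (by omega)
      simpa using this
    have e4 : padicValNat p (p * m) = padicValNat p m + 1 := by
      rw [padicValNat.mul (by omega) (by omega), padicValNat.self (by omega)]
      omega
    have hIH := IH m hmlt hm1
    rw [e2, e3, e4, Nat.cast_add, Nat.cast_add, Nat.cast_one, mul_add, mul_one,
      Nat.cast_sub (by omega : 1 ≤ p), Nat.cast_one]
    linarith
  · have hva : padicValNat p a = 0 := padicValNat.eq_zero_of_not_dvd hd
    obtain ⟨q, r, hrp, hr1, rfl⟩ : ∃ q r, r < p ∧ 1 ≤ r ∧ a = p * q + r := by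
      refine ⟨a / p, a % p, Nat.mod_lt _ (by omega), ?_, (Nat.div_add_mod a p).symm⟩
      rcases Nat.eq_zero_or_pos (a % p) with h | h
      · exact absurd (Nat.dvd_of_mod_eq_zero h) hd
      · exact h
    have e1 : p * q + r - 1 = p * q + (r - 1) := by omega
    rw [hva, e1, sumdig_mul_add (by omega) q r hrp, sumdig_mul_add (by omega) q (r - 1) (by omega)]
    simp only [Nat.cast_zero, mul_zero, add_zero]
    omega

/-- `p`-adic valuation of the Lagrange inversion coefficient
`D_k(a) = (-1)^(a+t)·a·(k+t-1)!/(k!·t!)`, `t = (k-a)/(p-1)`, where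
`a = i + ℓ(p-1)` with `1 ≤ i ≤ p-1`, and `k ≡ a (mod p-1)`, `k > 0`.
It is `p`-integral; if `ℓ = 0` then `ord_p D_k(a) = (s_p(k)-i)/(p-1)` and if
`ℓ ≥ 1` then `ord_p D_k(a) ≥ (s_p(k)-i)/(p-1) - (ℓ-1)`. -/
theorem stmt5 (p : ℕ) (hp : p.Prime) (i ℓ a k : ℕ)
    (hi1 : 1 ≤ i) (hi2 : i ≤ p - 1) (ha : a = i + ℓ * (p - 1))
    (hk : 0 < k) (hak : a ≤ k)
    (hcong : ((p : ℤ) - 1) ∣ ((k : ℤ) - (a : ℤ))) :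
    let t : ℕ := (k - a) / (p - 1)
    let D : ℚ := (-1) ^ (a + t) * (a : ℚ) * (Nat.factorial (k + t - 1) : ℚ) /
      ((Nat.factorial k : ℚ) * (Nat.factorial t : ℚ))
    0 ≤ padicValRat p D ∧
    (ℓ = 0 → ((p : ℤ) - 1) * padicValRat p D = ((Nat.digits p k).sum : ℤ) - (i : ℤ)) ∧
    (1 ≤ ℓ → ((Nat.digits p k).sum : ℤ) - (i : ℤ) - ((ℓ : ℤ) - 1) * ((p : ℤ) - 1) ≤
      ((p : ℤ) - 1) * padicValRat p D) := by
  intro t D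
  haveI : Fact p.Prime := ⟨hp⟩
  have hp2 : 2 ≤ p := hp.two_le
  have hp2' : (2:ℤ) ≤ (p:ℤ) := by exact_mod_cast hp2
  have ha1 : 1 ≤ a := by omega
  have hdvd : (p - 1) ∣ (k - a) := by
    have h1 : ((p - 1 : ℕ) : ℤ) ∣ ((k - a : ℕ) : ℤ) := by
      rw [Nat.cast_sub (by omega : 1 ≤ p), Nat.cast_sub hak]
      exact hcong
    exact_mod_cast h1
  have hkt : k = a + t * (p - 1) := by
    have h := Nat.div_mul_cancel hdvd
    show k = a + (k - a) / (p - 1) * (p - 1)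
    omega
  have hktZ : (k:ℤ) = (a:ℤ) + (t:ℤ) * ((p:ℤ) - 1) := by
    rw [hkt, Nat.cast_add, Nat.cast_mul, Nat.cast_sub (by omega : 1 ≤ p)]
    push_cast
    ring
  clear_value t
  obtain ⟨n, hn⟩ : ∃ n, k + t - 1 = n := ⟨_, rfl⟩
  have hn1 : n + 1 = k + t := by omega
  have hnZ : (n:ℤ) + 1 = (k:ℤ) + (t:ℤ) := by exact_mod_cast hn1
  have hntp : n = p * t + (a - 1) := by
    have hz : ((p * t + (a - 1) : ℕ) : ℤ) = (n:ℤ) := by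
      rw [Nat.cast_add, Nat.cast_mul, Nat.cast_sub ha1]
      push_cast
      linear_combination -hnZ - hktZ
    exact_mod_cast hz.symm
  -- valuation of D
  have hnum0 : a * n.factorial ≠ 0 := Nat.mul_ne_zero (by omega) (Nat.factorial_ne_zero n)
  have hden0 : k.factorial * t.factorial ≠ 0 :=
    Nat.mul_ne_zero (Nat.factorial_ne_zero k) (Nat.factorial_ne_zero t)
  have hnum : ((a * n.factorial : ℕ) : ℚ) ≠ 0 := Nat.cast_ne_zero.mpr hnum0
  have hden : ((k.factorial * t.factorial : ℕ) : ℚ) ≠ 0 := Nat.cast_ne_zero.mpr hden0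
  have hDq : D = (-1) ^ (a + t) *
      (((a * n.factorial : ℕ) : ℚ) / ((k.factorial * t.factorial : ℕ) : ℚ)) := by
    show (-1) ^ (a + t) * (a : ℚ) * ((k + t - 1).factorial : ℚ) /
      ((k.factorial : ℚ) * (t.factorial : ℚ)) = _
    rw [hn]
    push_cast
    ring
  have hvD : padicValRat p D =
      padicValRat p (((a * n.factorial : ℕ) : ℚ) / ((k.factorial * t.factorial : ℕ) : ℚ)) := by
    rcases neg_one_pow_eq_or ℚ (a + t) with h | h
    · rw [hDq, h, one_mul]
    · rw [hDq, h, neg_one_mul, padicValRat.neg]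
  have hvD2 : padicValRat p D = ((padicValNat p a : ℤ) + (padicValNat p n.factorial : ℤ))
      - ((padicValNat p k.factorial : ℤ) + (padicValNat p t.factorial : ℤ)) := by
    rw [hvD, padicValRat.div hnum hden, padicValRat.of_nat, padicValRat.of_nat,
      padicValNat.mul (by omega : a ≠ 0) (Nat.factorial_ne_zero n),
      padicValNat.mul (Nat.factorial_ne_zero k) (Nat.factorial_ne_zero t),
      Nat.cast_add, Nat.cast_add]
  have hE : ((p:ℤ) - 1) * padicValRat p D =
      ((p:ℤ) - 1) * (padicValNat p a : ℤ) + ((Nat.digits p k).sum : ℤ)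
        + ((Nat.digits p t).sum : ℤ) - ((Nat.digits p n).sum : ℤ) - 1 := by
    rw [hvD2]
    have l1 := legendreZ (p := p) n
    have l2 := legendreZ (p := p) k
    have l3 := legendreZ (p := p) t
    linear_combination l1 - l2 - l3 + hnZ
  refine ⟨?_, ?_, ?_⟩
  · -- integrality
    have fA : (k + t).choose t * t.factorial * k.factorial = (k + t).factorial := by
      have h := Nat.choose_mul_factorial_mul_factorial (Nat.le_add_left t k)
      rwa [Nat.add_sub_cancel] at h
    have fB : n.choose k * k.factorial * t.factorial = t * n.factorial := by
      rcases Nat.eq_zero_or_pos t with h0 | h0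
      · rw [h0, Nat.choose_eq_zero_of_lt (by omega : n < k)]
        simp
      · obtain ⟨t', ht'⟩ : ∃ t', t = t' + 1 := ⟨t - 1, by omega⟩
        have hkn : k ≤ n := by omega
        have h := Nat.choose_mul_factorial_mul_factorial hkn
        rw [show n - k = t' by omega] at h
        rw [ht', Nat.factorial_succ]
        calc n.choose k * k.factorial * ((t' + 1) * t'.factorial)
            = (t' + 1) * (n.choose k * k.factorial * t'.factorial) := by ring
          _ = (t' + 1) * n.factorial := by rw [h]
    have fsZ : ((k + t).factorial : ℤ) = ((k:ℤ) + t) * (n.factorial : ℤ) := by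
      rw [← hn1]
      push_cast [Nat.factorial_succ]
      linear_combination (n.factorial : ℤ) * hnZ
    have key : ((a * n.factorial : ℕ) : ℤ) =
        (((k + t).choose t : ℤ) - (p:ℤ) * (n.choose k : ℤ)) *
          ((k.factorial * t.factorial : ℕ) : ℤ) := by
      have fAZ : ((k + t).choose t : ℤ) * (t.factorial : ℤ) * (k.factorial : ℤ)
          = ((k + t).factorial : ℤ) := by exact_mod_cast fA
      have fBZ : (n.choose k : ℤ) * (k.factorial : ℤ) * (t.factorial : ℤ)
          = (t:ℤ) * (n.factorial : ℤ) := by exact_mod_cast fB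
      have hktpZ : (k:ℤ) + (t:ℤ) = (a:ℤ) + (p:ℤ) * (t:ℤ) := by linear_combination hktZ
      push_cast
      linear_combination -fAZ + (p:ℤ) * fBZ - fsZ - (n.factorial : ℤ) * hktpZ
    have hqc : ((a * n.factorial : ℕ) : ℚ) / ((k.factorial * t.factorial : ℕ) : ℚ)
        = ((((k + t).choose t : ℤ) - (p:ℤ) * (n.choose k : ℤ) : ℤ) : ℚ) := by
      rw [div_eq_iff hden]
      exact_mod_cast key
    rw [hvD, hqc, padicValRat.of_int]
    positivity
  · -- case ℓ = 0
    intro hl0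
    subst hl0
    simp only [Nat.zero_mul, Nat.add_zero, zero_mul, add_zero] at ha
    have hva : padicValNat p a = 0 := by
      apply padicValNat.eq_zero_of_not_dvd
      intro hdvd'
      have := Nat.le_of_dvd (by omega) hdvd'
      omega
    have hSn : (Nat.digits p n).sum = (Nat.digits p t).sum + (a - 1) := by
      rw [hntp]
      exact sumdig_mul_add (by omega) t (a - 1) (by omega)
    rw [hE, hva, hSn]
    simp only [Nat.cast_zero, mul_zero, zero_add]
    omega
  · -- case 1 ≤ ℓ
    intro hl1
    have hmul : p - 1 ≤ ℓ * (p - 1) := Nat.le_mul_of_pos_left (p - 1) hl1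
    have hap : p ≤ a := by omega
    have hSaa : (Nat.digits p a).sum < a := by
      rw [Nat.digits_def' (by omega : 1 < p) (by omega : 0 < a), List.sum_cons]
      have h1 := Nat.div_add_mod a p
      have h2 : 1 ≤ a / p := (Nat.one_le_div_iff (by omega)).mpr hap
      have h3 : 2 * (a / p) ≤ p * (a / p) := Nat.mul_le_mul_right _ hp2
      have h4 := Nat.digit_sum_le p (a / p)
      omega
    have hdvd2 : (p - 1) ∣ (a - (Nat.digits p a).sum) := by
      rcases eq_or_lt_of_le hp2 with h2 | h3
      · rw [← h2]
        exact one_dvd _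
      · have hmod : p % (p - 1) = 1 := by
          rw [Nat.mod_eq_sub_mod (by omega : p - 1 ≤ p), show p - (p - 1) = 1 by omega]
          exact Nat.mod_eq_of_lt (by omega)
        have hme := Nat.modEq_digits_sum (p - 1) p hmod a
        exact (Nat.modEq_iff_dvd' (Nat.digit_sum_le p a)).mp hme.symm
    have hSa_le : (Nat.digits p a).sum + (p - 1) ≤ a := by
      have := Nat.le_of_dvd (by omega) hdvd2
      omega
    have haZ : (a:ℤ) = (i:ℤ) + (ℓ:ℤ) * ((p:ℤ) - 1) := by
      rw [ha, Nat.cast_add, Nat.cast_mul, Nat.cast_sub (by omega : 1 ≤ p)]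
      push_cast
      ring
    have hSaZ : ((Nat.digits p a).sum : ℤ) ≤ (i:ℤ) + ((ℓ:ℤ) - 1) * ((p:ℤ) - 1) := by
      have h1 : ((Nat.digits p a).sum : ℤ) + ((p:ℤ) - 1) ≤ (a:ℤ) := by omega
      have h2 : (i:ℤ) + ((ℓ:ℤ) - 1) * ((p:ℤ) - 1) = (a:ℤ) - ((p:ℤ) - 1) := by
        linear_combination -haZ
      linarith
    have hSpt : (Nat.digits p (p * t)).sum = (Nat.digits p t).sum := by
      simpa using sumdig_mul_add (p := p) (by omega) t 0 (by omega)
    have hSn_le : ((Nat.digits p n).sum : ℤ) ≤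
        ((Nat.digits p t).sum : ℤ) + ((Nat.digits p (a - 1)).sum : ℤ) := by
      rw [hntp]
      have h := sumdig_add_le (p := p) (p * t) (a - 1)
      rw [hSpt] at h
      exact h
    have hpred := sumdig_pred (p := p) a ha1
    have hva_nn : (0:ℤ) ≤ ((p:ℤ) - 1) * (padicValNat p a : ℤ) :=
      mul_nonneg (by linarith) (by positivity)
    rw [hE]
    linarith [hSn_le, hpred, hSaZ, hva_nn]
end

section
/- Let p be a prime, y ∈ Z_p[[z]] the power series with y(0)=0 satisfying y^p - y = z, and fix an integer i with 0 ≤ i ≤ p-2. For natural numbers N, a define E_k(i,N) to be the z^k-coefficient of y^i(p·y^(p-1)-1)^(p^N-1). Then for all k ≥ 0 and a ≥ 0, E_k(i, N+a) ≡ E_k(i, N) modulo p^(N+1). -/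
/-- Congruence `E_k(i, N+a) ≡ E_k(i, N) (mod p^(N+1))` for the `z^k`-coefficients of
`y^i(p·y^(p-1)-1)^(p^N-1)`, where `y ∈ Z_p[[z]]` satisfies `y(0)=0`, `y^p - y = z`. -/
theorem stmt7 (p : ℕ) [hp : Fact p.Prime] (y : PowerSeries ℤ_[p])
    (h0 : PowerSeries.constantCoeff y = 0)
    (hy : y ^ p - y = PowerSeries.X)
    (i : ℕ) (hi : i ≤ p - 2) (N a k : ℕ) :
    (p : ℤ_[p]) ^ (N + 1) ∣
      PowerSeries.coeff k (y ^ i * ((p : PowerSeries ℤ_[p]) * y ^ (p - 1) - 1) ^ (p ^ (N + a) - 1)) -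
      PowerSeries.coeff k (y ^ i * ((p : PowerSeries ℤ_[p]) * y ^ (p - 1) - 1) ^ (p ^ N - 1)) := by
  rcases Nat.eq_zero_or_pos a with rfl | ha
  · simp
  set u : PowerSeries ℤ_[p] := (p : PowerSeries ℤ_[p]) * y ^ (p - 1) - 1 with hu
  -- p divides u^(p^a-1) - 1
  have hdvd2 : (p : PowerSeries ℤ_[p]) ∣ u ^ (p ^ a - 1) - 1 := by
    have key : u ^ (p ^ a - 1) - 1 =
        (u ^ (p ^ a - 1) - (-1) ^ (p ^ a - 1)) + ((-1) ^ (p ^ a - 1) - 1) := by ring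
    rw [key]
    refine dvd_add (dvd_trans ?_ (sub_dvd_pow_sub_pow u (-1) (p ^ a - 1))) ?_
    · rw [hu, sub_neg_eq_add, sub_add_cancel]; exact Dvd.intro _ rfl
    · rcases Nat.even_or_odd (p ^ a - 1) with he | ho
      · rw [he.neg_one_pow, sub_self]; exact dvd_zero _
      · rw [ho.neg_one_pow]
        have h1 : 1 ≤ p ^ a := Nat.one_le_pow _ _ hp.out.pos
        have heven : 2 ∣ p ^ a := by rw [Nat.odd_iff] at ho; omega
        have hp2 : p = 2 :=
          ((Nat.prime_dvd_prime_iff_eq Nat.prime_two hp.out).mp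
            (Nat.prime_two.dvd_of_dvd_pow heven)).symm
        subst hp2
        exact ⟨-1, by push_cast; ring⟩
  -- main divisibility of the power series difference
  have hmain : (p : PowerSeries ℤ_[p]) ^ (N + 1) ∣
      y ^ i * u ^ (p ^ (N + a) - 1) - y ^ i * u ^ (p ^ N - 1) := by
    have hpow := dvd_sub_pow_of_dvd_sub hdvd2 N
    rw [one_pow, ← pow_mul] at hpow
    have hexp : p ^ N - 1 + (p ^ a - 1) * p ^ N = p ^ (N + a) - 1 := by
      rw [pow_add, Nat.sub_mul, one_mul, mul_comm (p ^ a) (p ^ N)]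
      have hA : 1 ≤ p ^ N := Nat.one_le_pow _ _ hp.out.pos
      have hle : p ^ N ≤ p ^ N * p ^ a :=
        Nat.le_mul_of_pos_right _ (Nat.one_le_pow _ _ hp.out.pos)
      omega
    have hfac : y ^ i * u ^ (p ^ (N + a) - 1) - y ^ i * u ^ (p ^ N - 1) =
        y ^ i * u ^ (p ^ N - 1) * (u ^ ((p ^ a - 1) * p ^ N) - 1) := by
      rw [mul_sub, mul_one, mul_assoc, ← pow_add, hexp]
    rw [hfac]
    exact Dvd.dvd.mul_left hpow _
  obtain ⟨t, ht⟩ := hmain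
  rw [← map_sub, ht]
  have : (p : PowerSeries ℤ_[p]) ^ (N + 1) = PowerSeries.C ((p : ℤ_[p]) ^ (N + 1)) := by
    rw [map_pow, map_natCast]
  rw [this, PowerSeries.coeff_C_mul]
  exact Dvd.intro _ rfl
end

section
/- Let p > d ≥ 1 with p prime, and let f(x) ∈ W[x] be a monic polynomial of degree d over the Witt vectors W over F_q (or over Z_p). For every natural number a ≥ 1, the coefficient of x^(p^a - 1) in f(x)^(Σ_{v=0}^{a-1} ⌈(p-1)/d⌉ p^v) is congruent modulo p to the product over v = 0,…,a-1 of the σ^v-twists of the coefficient of x^(p-1) in f(x)^⌈(p-1)/d⌉, where σ is the Frobenius on W. In particular, over Z_p it is congruent to ([f(x)^⌈(p-1)/d⌉]_{p-1})^a mod p. -/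
/-!
Reduce mod `p`: the coefficients then lie in a finite field `K` with `q` elements, where
`g ^ q = expand q g`. With `N a = ∑_{v<a} μ q^v` we have `N (a+1) = μ + q N a`, hence
`g ^ N (a+1) = g ^ μ * expand q (g ^ N a)`. As `q^(a+1) - 1 = q (q^a - 1) + (q - 1)` and
`deg g^μ < 2q - 1`, the only monomial of `g ^ μ` that contributes to this coefficient is
`x^(q-1)`, so each step multiplies the coefficient by `[g^μ]_{q-1}`. For
`μ = ⌈(p-1)/d⌉` the degree bound is `dμ ≤ p - 2 + d < 2p - 1`.
-/

open Polynomial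

theorem Polynomial.coeff_mul_expand_of_natDegree_lt {R : Type*} [CommSemiring R] {q r : ℕ}
    (hr : r < q) {h : R[X]} (hh : h.natDegree < q + r) (k : R[X]) (n : ℕ) :
    (h * expand R q k).coeff (q * n + r) = h.coeff r * k.coeff n := by
  have hq : 0 < q := by omega
  rw [coeff_mul, Finset.sum_eq_single_of_mem (r, q * n) (by simp [add_comm]),
    coeff_expand_mul' hq]
  rintro ⟨i, j⟩ hij hne
  rw [Finset.HasAntidiagonal.mem_antidiagonal] at hij
  rw [coeff_expand hq]
  split_ifs with hj
  · obtain ⟨m, rfl⟩ := hj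
    have hi : q + r ≤ i := by
      rcases lt_trichotomy m n with hmn | rfl | hmn
      · nlinarith [Nat.mul_le_mul_left q hmn]
      · simp only [ne_eq, Prod.mk.injEq, and_true] at hij hne
        omega
      · nlinarith [Nat.mul_le_mul_left q hmn]
    have hdeg : h.natDegree < i := by omega
    rw [coeff_eq_zero_of_natDegree_lt hdeg, zero_mul]
  · rw [mul_zero]

theorem FiniteField.coeff_pow_sum_mul_card_pow {K : Type*} [Field K] [Fintype K] (g : K[X])
    {μ : ℕ} (hμ : (g ^ μ).natDegree < 2 * Fintype.card K - 1) (a : ℕ) :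
    (g ^ ∑ v ∈ Finset.range a, μ * Fintype.card K ^ v).coeff (Fintype.card K ^ a - 1) =
      (g ^ μ).coeff (Fintype.card K - 1) ^ a := by
  set q := Fintype.card K
  have hq : 0 < q := Fintype.card_pos
  induction a with
  | zero => simp
  | succ a ih =>
    have hsum : ∑ v ∈ Finset.range (a + 1), μ * q ^ v =
        μ + q * ∑ v ∈ Finset.range a, μ * q ^ v := by
      rw [Finset.sum_range_succ', Finset.mul_sum, pow_zero, mul_one, add_comm]
      exact congrArg _ (Finset.sum_congr rfl fun v _ => by ring)
    have hexp : q ^ (a + 1) - 1 = q * (q ^ a - 1) + (q - 1) := by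
      have : q ≤ q * q ^ a := Nat.le_mul_of_pos_right q (pow_pos hq a)
      rw [pow_succ', Nat.mul_sub_one]
      omega
    rw [hsum, hexp, pow_add, pow_mul', ← FiniteField.expand_card,
      coeff_mul_expand_of_natDegree_lt (by omega) (by omega), ih, pow_succ']

theorem PadicInt.p_dvd_sub_iff_toZMod_eq {p : ℕ} [Fact p.Prime] {x y : ℤ_[p]} :
    (p : ℤ_[p]) ∣ x - y ↔ toZMod x = toZMod y := by
  rw [← sub_eq_zero, ← map_sub, ← RingHom.mem_ker, ker_toZMod, maximalIdeal_eq_span_p,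
    Ideal.mem_span_singleton]

theorem stmt8_general (p d : ℕ) [hp : Fact p.Prime] (hpd : d < p)
    (f : Polynomial ℤ_[p]) (hdeg : f.natDegree = d)
    (a : ℕ) :
    (p : ℤ_[p]) ∣
      (f ^ (∑ v ∈ Finset.range a, ((p - 2 + d) / d) * p ^ v)).coeff (p ^ a - 1) -
      ((f ^ ((p - 2 + d) / d)).coeff (p - 1)) ^ a := by
  set g := f.map (PadicInt.toZMod (p := p))
  have hμ : (g ^ ((p - 2 + d) / d)).natDegree < 2 * Fintype.card (ZMod p) - 1 := by
    calc (g ^ ((p - 2 + d) / d)).natDegree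
        ≤ (p - 2 + d) / d * d := natDegree_pow_le_of_le _ (hdeg ▸ natDegree_map_le)
      _ ≤ p - 2 + d := Nat.div_mul_le_self _ _
      _ < 2 * Fintype.card (ZMod p) - 1 := by rw [ZMod.card]; omega
  rw [PadicInt.p_dvd_sub_iff_toZMod_eq, map_pow, ← coeff_map, ← coeff_map, Polynomial.map_pow,
    Polynomial.map_pow]
  simpa only [ZMod.card] using FiniteField.coeff_pow_sum_mul_card_pow g hμ a

/-- For `p > d ≥ 1` prime and `f ∈ Z_p[x]` monic of degree `d` (so the Frobenius σ is
the identity), the `x^(p^a-1)`-coefficient of `f^(Σ_{v<a} ⌈(p-1)/d⌉ p^v)` is congruent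
mod `p` to the `a`-th power of the `x^(p-1)`-coefficient of `f^⌈(p-1)/d⌉`.
Here `⌈(p-1)/d⌉ = (p - 2 + d)/d` in natural division. -/
theorem stmt8 (p d : ℕ) [hp : Fact p.Prime] (hd : 1 ≤ d) (hpd : d < p)
    (f : Polynomial ℤ_[p]) (hf : f.Monic) (hdeg : f.natDegree = d)
    (a : ℕ) (ha : 1 ≤ a) :
    (p : ℤ_[p]) ∣
      (f ^ (∑ v ∈ Finset.range a, ((p - 2 + d) / d) * p ^ v)).coeff (p ^ a - 1) -
      ((f ^ ((p - 2 + d) / d)).coeff (p - 1)) ^ a :=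
  stmt8_general p d (hp := hp) hpd f hdeg a
end

section
/- Let p > d ≥ 1 be integers with p prime, let 1 ≤ j ≤ p-1, and let a, m ≥ 1. Let k_1 ≥ k_2 ≥ … ≥ k_d ≥ 0 be integers with Σ k_ℓ = m·p^a - j, and suppose that s_p(k_1 - k_2) + s_p(k_2 - k_3) + … + s_p(k_{d-1} - k_d) + s_p(k_d) is achieved with all base-p digits of the differences supported in positions 0,…,a-1 (i.e. the tuple lies in K_r^a). Then s_p(k_1-k_2) + … + s_p(k_{d-1}-k_d) + s_p(k_d) ≥ ⌊(m-1)p/d⌋ + (a-1)·⌈(p-1)/d⌉ + ⌈(p-j)/d⌉. -/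
private def LB (p d : ℕ) : ℕ → ℕ → ℕ
  | 0, N => (N + d - 1) / d
  | (a+1), N => (N % p + d - 1) / d + LB p d a (N / p)

private lemma ceil_le_of_le_mul {d S T : ℕ} (hd : 1 ≤ d) (h : S ≤ d * T) :
    (S + d - 1) / d ≤ T := by
  calc (S + d - 1) / d ≤ (d * T + (d - 1)) / d := Nat.div_le_div_right (by omega)
    _ = T + (d - 1) / d := Nat.mul_add_div (by omega) _ _
    _ = T := by rw [Nat.div_eq_of_lt (by omega)]; omega

private lemma floor_add_ceil_le {d : ℕ} (hd : 1 ≤ d) (x y : ℕ) :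
    x / d + (y + d - 1) / d ≤ (x + y + d - 1) / d := by
  have h := Nat.div_add_mod x d
  have h2 : x + y + d - 1 = d * (x / d) + (x % d + y + d - 1) := by omega
  rw [h2, Nat.mul_add_div (by omega)]
  exact Nat.add_le_add_left (Nat.div_le_div_right (by omega)) _

private lemma carry_le {p d : ℕ} (hd : 1 ≤ d) (hdp : d ≤ p) (c r : ℕ) :
    c + (r + d - 1) / d ≤ (c * p + r + d - 1) / d := by
  have h1 : (d * c + (r + d - 1)) / d = c + (r + d - 1) / d := Nat.mul_add_div (by omega) _ _
  rw [← h1]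
  apply Nat.div_le_div_right
  have : d * c ≤ c * p := by rw [mul_comm]; exact Nat.mul_le_mul_left c hdp
  omega

private lemma ceil_succ_le {d : ℕ} (hd : 1 ≤ d) (M : ℕ) :
    (M + 1 + d - 1) / d ≤ (M + d - 1) / d + 1 := by
  rw [← Nat.add_div_right _ (show 0 < d by omega)]
  exact Nat.div_le_div_right (by omega)

private lemma LB_succ_le {p d : ℕ} (hd : 1 ≤ d) (hp : 2 ≤ p) :
    ∀ a M, LB p d a (M + 1) ≤ LB p d a M + 1 := by
  intro a
  induction a with
  | zero => intro M; exact ceil_succ_le hd M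
  | succ a ih =>
    intro M
    show ((M+1) % p + d - 1)/d + LB p d a ((M+1)/p) ≤ (M % p + d - 1)/d + LB p d a (M/p) + 1
    have hdm := Nat.div_add_mod M p
    rcases Nat.lt_or_ge (M % p + 1) p with hlt | hge
    · have hmod : (M+1) % p = M % p + 1 := by
        conv_lhs => rw [← Nat.div_add_mod M p]
        rw [show p * (M/p) + M % p + 1 = M % p + 1 + p * (M/p) by ring,
            Nat.add_mul_mod_self_left, Nat.mod_eq_of_lt hlt]
      have hdiv : (M+1)/p = M/p := by
        conv_lhs => rw [← Nat.div_add_mod M p]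
        rw [show p * (M/p) + M % p + 1 = M % p + 1 + p * (M/p) by ring,
            Nat.add_mul_div_left _ _ (show 0 < p by omega), Nat.div_eq_of_lt hlt]
        omega
      rw [hmod, hdiv]
      have := ceil_succ_le hd (M % p)
      omega
    · have hmp : M % p < p := Nat.mod_lt _ (by omega)
      have heq : M + 1 = p * (M/p + 1) := by rw [Nat.mul_add, Nat.mul_one]; omega
      have hmod : (M+1) % p = 0 := by rw [heq]; exact Nat.mul_mod_right _ _
      have hdiv : (M+1)/p = M/p + 1 := by rw [heq]; exact Nat.mul_div_cancel_left _ (by omega)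
      rw [hmod, hdiv]
      have h0 : (0 + d - 1)/d = 0 := Nat.div_eq_of_lt (by omega)
      rw [h0]
      have := ih (M/p)
      generalize (M % p + d - 1)/d = X
      omega

private lemma LB_add_le {p d : ℕ} (hd : 1 ≤ d) (hp : 2 ≤ p) (a M : ℕ) :
    ∀ c, LB p d a (M + c) ≤ LB p d a M + c := by
  intro c
  induction c with
  | zero => simp
  | succ c ih =>
    have := LB_succ_le hd hp a (M + c)
    have h2 : M + (c+1) = (M + c) + 1 := by omega
    rw [h2]
    omega

private lemma LB_le_sum {p d : ℕ} (hd : 1 ≤ d) (hp : 2 ≤ p) (hdp : d ≤ p) :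
    ∀ a (S : ℕ → ℕ) (N : ℕ), (∑ i ∈ Finset.range (a+1), S i * p ^ i) = N →
    LB p d a N ≤ ∑ i ∈ Finset.range (a+1), (S i + d - 1) / d := by
  intro a
  induction a with
  | zero =>
    intro S N h
    rw [Finset.sum_range_one, pow_zero, mul_one] at h
    rw [Finset.sum_range_one]
    subst h
    exact le_refl _
  | succ a ih =>
    intro S N h
    rw [Finset.sum_range_succ'] at h
    have hMp : (∑ i ∈ Finset.range (a+1), S (i+1) * p ^ i) * p + S 0 = N := by
      rw [← h, pow_zero, mul_one, Finset.sum_mul]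
      congr 1
      refine Finset.sum_congr rfl fun i _ => ?_
      rw [pow_succ]; ring
    set M := ∑ i ∈ Finset.range (a+1), S (i+1) * p ^ i with hM
    have hmod : N % p = S 0 % p := by
      rw [← hMp, show M * p + S 0 = S 0 + M * p by ring, Nat.add_mul_mod_self_right]
    have hdiv : N / p = M + S 0 / p := by
      rw [← hMp, show M * p + S 0 = S 0 + M * p by ring,
        Nat.add_mul_div_right _ _ (show 0 < p by omega)]
      omega
    show (N % p + d - 1) / d + LB p d a (N / p) ≤ _
    rw [Finset.sum_range_succ']
    have h1 : LB p d a (N / p) ≤ LB p d a M + S 0 / p := by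
      rw [hdiv]; exact LB_add_le hd hp a M _
    have h2 : LB p d a M ≤ ∑ i ∈ Finset.range (a+1), (S (i+1) + d - 1) / d := ih _ _ rfl
    have h3 : (S 0 % p + d - 1) / d + S 0 / p ≤ (S 0 + d - 1) / d := by
      have hc := carry_le (p := p) hd hdp (S 0 / p) (S 0 % p)
      have h4 : S 0 / p * p + S 0 % p = S 0 := Nat.div_add_mod' _ _
      rw [show S 0 / p * p + S 0 % p + d - 1 = S 0 + d - 1 by rw [h4]] at hc
      omega
    rw [hmod]
    generalize hX : (S 0 % p + d - 1) / d = X at h3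
    generalize (S 0 + d - 1) / d = Y at h3 ⊢
    omega

private lemma target_le_LB {p d : ℕ} (hd : 1 ≤ d) (hdp : d < p) :
    ∀ b m j, 1 ≤ m → 1 ≤ j → j < p →
    (m - 1) * p / d + b * ((p - 2 + d) / d) + (p - j + d - 1) / d
      ≤ LB p d b (m * p ^ (b+1) - j) := by
  have hp : 2 ≤ p := by omega
  intro b
  induction b with
  | zero =>
    intro m j hm hj1 hj2
    show _ ≤ (m * p ^ 1 - j + d - 1) / d
    have hpm : p ≤ m * p ^ 1 := by
      rw [pow_one]; exact Nat.le_mul_of_pos_left p hm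
    have hmul : (m - 1) * p = m * p - p := by rw [Nat.sub_mul, one_mul]
    have hsub : m * p ^ 1 - j = (m - 1) * p + (p - j) := by
      rw [pow_one] at *; omega
    rw [hsub]
    have := floor_add_ceil_le hd ((m - 1) * p) (p - j)
    simpa using this
  | succ b ih =>
    intro m j hm hj1 hj2
    set A := m * p ^ (b+1) with hA
    have hA1 : 1 ≤ A := by
      have : 0 < p ^ (b+1) := Nat.pow_pos (by omega)
      exact Nat.one_le_iff_ne_zero.mpr (by positivity)
    have hpA : p * A = m * p ^ (b+2) := by rw [hA, pow_succ]; ring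
    have hpAp : p ≤ p * A := Nat.le_mul_of_pos_right p hA1
    obtain ⟨A', hA'⟩ : ∃ A', A = A' + 1 := ⟨A - 1, by omega⟩
    have h2 : p * (A - 1) + p = p * A := by rw [hA', Nat.add_sub_cancel]; ring
    have hNsplit : m * p ^ (b+2) - j = p * (A - 1) + (p - j) := by omega
    have hmod : (m * p ^ (b+2) - j) % p = p - j := by
      rw [hNsplit, Nat.mul_add_mod, Nat.mod_eq_of_lt (by omega)]
    have hdiv : (m * p ^ (b+2) - j) / p = A - 1 := by
      rw [hNsplit, Nat.mul_add_div (by omega), Nat.div_eq_of_lt (by omega)]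
      omega
    have hIH := ih m 1 hm le_rfl (by omega)
    rw [show m * p ^ (b+1) - 1 = A - 1 from rfl] at hIH
    show (m - 1) * p / d + (b+1) * ((p - 2 + d) / d) + (p - j + d - 1) / d ≤
      ((m * p ^ (b+2) - j) % p + d - 1) / d + LB p d b ((m * p ^ (b+2) - j) / p)
    rw [hmod, hdiv]
    have hC : (p - 1 + d - 1) / d = (p - 2 + d) / d := by congr 1; omega
    rw [hC] at hIH
    have hbC : (b+1) * ((p - 2 + d) / d) = b * ((p - 2 + d) / d) + (p - 2 + d) / d := by ring
    generalize (p - 2 + d) / d = C at *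
    generalize (m - 1) * p / d = F at *
    generalize (p - j + d - 1) / d = J at *
    omega

private lemma expand_digits {p : ℕ} (hp : 2 ≤ p) :
    ∀ a b, b < p ^ a → ∑ i ∈ Finset.range a, b / p ^ i % p * p ^ i = b := by
  intro a
  induction a with
  | zero =>
    intro b hb
    rw [pow_zero] at hb
    obtain rfl : b = 0 := Nat.lt_one_iff.mp hb
    simp
  | succ a ih =>
    intro b hb
    rw [Finset.sum_range_succ']
    have hb' : b / p < p ^ a := Nat.div_lt_of_lt_mul (by rw [← pow_succ']; exact hb)
    have hterm : ∀ i, b / p ^ (i+1) % p * p ^ (i+1) = b / p / p ^ i % p * p ^ i * p := by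
      intro i
      rw [Nat.div_div_eq_div_mul, ← pow_succ', pow_succ]
      ring
    calc (∑ i ∈ Finset.range a, b / p ^ (i+1) % p * p ^ (i+1)) + b / p ^ 0 % p * p ^ 0
        = (∑ i ∈ Finset.range a, b / p / p ^ i % p * p ^ i) * p + b % p := by
          rw [Finset.sum_mul]
          simp only [hterm, pow_zero, Nat.div_one, mul_one]
      _ = b / p * p + b % p := by rw [ih _ hb']
      _ = b := Nat.div_add_mod' b p

private lemma digits_sum_eq {p : ℕ} (hp : 2 ≤ p) :
    ∀ a b, b < p ^ a → (Nat.digits p b).sum = ∑ i ∈ Finset.range a, b / p ^ i % p := by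
  intro a
  induction a with
  | zero =>
    intro b hb
    rw [pow_zero] at hb
    obtain rfl : b = 0 := Nat.lt_one_iff.mp hb
    simp
  | succ a ih =>
    intro b hb
    rcases Nat.eq_zero_or_pos b with rfl | hbpos
    · simp
    · have hb' : b / p < p ^ a := Nat.div_lt_of_lt_mul (by rw [← pow_succ']; exact hb)
      rw [Nat.digits_def' hp hbpos, List.sum_cons, ih _ hb', Finset.sum_range_succ']
      have hterm : ∀ i, b / p ^ (i+1) % p = b / p / p ^ i % p := by
        intro i
        rw [Nat.div_div_eq_div_mul, ← pow_succ']
      simp only [hterm, pow_zero, Nat.div_one]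
      omega

private lemma telescope (k : ℕ → ℕ) (hanti : ∀ ℓ, k (ℓ+1) ≤ k ℓ) :
    ∀ n, (∑ ℓ ∈ Finset.range n, (ℓ+1) * (k ℓ - k (ℓ+1))) + n * k n
      = ∑ ℓ ∈ Finset.range n, k ℓ := by
  intro n
  induction n with
  | zero => simp
  | succ n ih =>
    rw [Finset.sum_range_succ, Finset.sum_range_succ (f := k)]
    have h1 : (n+1) * (k n - k (n+1)) + (n+1) * k (n+1) = (n+1) * k n := by
      rw [← Nat.mul_add, Nat.sub_add_cancel (hanti n)]
    have h2 : (n+1) * k n = n * k n + k n := by ring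
    omega

/-- Lower bound on the digit sum `s_p(k) = Σ_ℓ s_p(k_ℓ - k_{ℓ+1})` (with `k_d = 0`)
for tuples `k_1 ≥ … ≥ k_d ≥ 0` with `Σ k_ℓ = m·p^a - j` lying in `K^a` (all the base-p
digits of the successive differences are supported in positions `0,…,a-1`, i.e. each
difference is `< p^a`):
`s_p(k) ≥ ⌊(m-1)p/d⌋ + (a-1)·⌈(p-1)/d⌉ + ⌈(p-j)/d⌉`. -/
theorem stmt9 (p d : ℕ) (hp : p.Prime) (hd : 1 ≤ d) (hpd : d < p)
    (j a m : ℕ) (hj1 : 1 ≤ j) (hj2 : j ≤ p - 1) (ha : 1 ≤ a) (hm : 1 ≤ m)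
    (k : ℕ → ℕ)
    (hanti : ∀ ℓ : ℕ, k (ℓ + 1) ≤ k ℓ)
    (hzero : ∀ ℓ : ℕ, d ≤ ℓ → k ℓ = 0)
    (hsum : ∑ ℓ ∈ Finset.range d, k ℓ = m * p ^ a - j)
    (hbox : ∀ ℓ : ℕ, k ℓ - k (ℓ + 1) < p ^ a) :
    (m - 1) * p / d + (a - 1) * ((p - 2 + d) / d) + (p - j + d - 1) / d ≤
      ∑ ℓ ∈ Finset.range d, (Nat.digits p (k ℓ - k (ℓ + 1))).sum := by
  have hp2 : 2 ≤ p := hp.two_le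
  have hjp : j < p := by omega
  obtain ⟨b, rfl⟩ : ∃ b, a = b + 1 := ⟨a - 1, by omega⟩
  have hkd : k d = 0 := hzero d le_rfl
  have htel := telescope k hanti d
  rw [hkd, Nat.mul_zero, Nat.add_zero, hsum] at htel
  -- htel : ∑ ℓ ∈ range d, (ℓ+1) * (k ℓ - k (ℓ+1)) = m * p ^ (b+1) - j
  set S : ℕ → ℕ := fun i => ∑ ℓ ∈ Finset.range d, (ℓ+1) * (((k ℓ - k (ℓ+1))) / p ^ i % p)
    with hS
  have hSsum : ∑ i ∈ Finset.range (b+1), S i * p ^ i = m * p ^ (b+1) - j := by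
    rw [← htel]
    calc ∑ i ∈ Finset.range (b+1), S i * p ^ i
        = ∑ i ∈ Finset.range (b+1), ∑ ℓ ∈ Finset.range d,
            (ℓ+1) * ((k ℓ - k (ℓ+1)) / p ^ i % p * p ^ i) := by
          refine Finset.sum_congr rfl fun i _ => ?_
          rw [hS, Finset.sum_mul]
          refine Finset.sum_congr rfl fun ℓ _ => ?_
          ring
      _ = ∑ ℓ ∈ Finset.range d, ∑ i ∈ Finset.range (b+1),
            (ℓ+1) * ((k ℓ - k (ℓ+1)) / p ^ i % p * p ^ i) := Finset.sum_comm
      _ = ∑ ℓ ∈ Finset.range d, (ℓ+1) * (k ℓ - k (ℓ+1)) := by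
          refine Finset.sum_congr rfl fun ℓ _ => ?_
          rw [← Finset.mul_sum, expand_digits hp2 (b+1) _ (hbox ℓ)]
  have hmain := LB_le_sum (show 1 ≤ d from hd) hp2 (le_of_lt hpd) b S _ hSsum
  have heval := target_le_LB (show 1 ≤ d from hd) hpd b m j hm hj1 hjp
  have hstep : ∀ i, (S i + d - 1) / d ≤ ∑ ℓ ∈ Finset.range d, ((k ℓ - k (ℓ+1)) / p ^ i % p) := by
    intro i
    apply ceil_le_of_le_mul hd
    rw [hS, Finset.mul_sum]
    apply Finset.sum_le_sum
    intro ℓ hℓ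
    have hℓd : ℓ + 1 ≤ d := by
      have := Finset.mem_range.mp hℓ
      omega
    exact Nat.mul_le_mul_right _ hℓd
  have h2 : ∑ i ∈ Finset.range (b+1), (S i + d - 1) / d
      ≤ ∑ ℓ ∈ Finset.range d, (Nat.digits p (k ℓ - k (ℓ+1))).sum := by
    calc ∑ i ∈ Finset.range (b+1), (S i + d - 1) / d
        ≤ ∑ i ∈ Finset.range (b+1), ∑ ℓ ∈ Finset.range d, ((k ℓ - k (ℓ+1)) / p ^ i % p) :=
          Finset.sum_le_sum fun i _ => hstep i
      _ = ∑ ℓ ∈ Finset.range d, ∑ i ∈ Finset.range (b+1), ((k ℓ - k (ℓ+1)) / p ^ i % p) :=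
          Finset.sum_comm
      _ = ∑ ℓ ∈ Finset.range d, (Nat.digits p (k ℓ - k (ℓ+1))).sum :=
          Finset.sum_congr rfl fun ℓ _ => (digits_sum_eq hp2 (b+1) _ (hbox ℓ)).symm
  have hfin := le_trans heval (le_trans hmain h2)
  rw [Nat.add_sub_cancel]
  exact hfin
end

section
/- Let X be a smooth projective geometrically integral curve of genus g over F_q, q = p^ν, with zeta function numerator P(T) = Π_{i=1}^{2g} (1 - π_i T), and let 0 ≤ λ ≤ 1/2 be rational. Then p^⌈νnλ⌉ divides q^n + 1 - #X(F_{q^n}) for all n ≥ 1 if and only if the first slope of the p-adic Newton polygon of P(T) (normalized by ν) is at least λ, i.e. ord_p(π_i) ≥ νλ for all i. -/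
open Finset

section Helpers

variable {L : Type*} [Field L] [CharZero L] (v : AddValuation L (WithTop ℚ))

lemma sz_nsmul_coe (n : ℕ) (q : ℚ) :
    n • ((q : WithTop ℚ)) = (((n * q : ℚ)) : WithTop ℚ) := by
  induction n with
  | zero => simp
  | succ k ih =>
      rw [succ_nsmul, ih, show ((k+1 : ℕ) : ℚ) * q = (k:ℚ)*q + q by push_cast; ring,
        WithTop.coe_add]

lemma sz_nsmul_top (n : ℕ) (h : n ≠ 0) : n • (⊤ : WithTop ℚ) = ⊤ := by
  cases n with
  | zero => simp at h
  | succ k => rw [succ_nsmul]; simp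

lemma sz_nat_nonneg (n : ℕ) : (0 : WithTop ℚ) ≤ v (n : L) := by
  induction n with
  | zero => simp [v.map_zero]
  | succ k ih =>
      push_cast
      refine le_trans ?_ (v.map_add _ _)
      simp only [le_min_iff]
      exact ⟨ih, by rw [v.map_one]⟩

lemma sz_int_nonneg (m : ℤ) : (0 : WithTop ℚ) ≤ v (m : L) := by
  obtain ⟨n, rfl | rfl⟩ := Int.eq_nat_or_neg m
  · push_cast; exact sz_nat_nonneg v n
  · push_cast; rw [v.map_neg]; exact sz_nat_nonneg v n

lemma sz_sum_le {ι : Type*} (s : Finset ι) (f : ι → L) (c : WithTop ℚ)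
    (h : ∀ i ∈ s, c ≤ v (f i)) : c ≤ v (∑ i ∈ s, f i) := by
  classical
  induction s using Finset.induction_on with
  | empty => simp [v.map_zero]
  | @insert a s' hx ih =>
      rw [Finset.sum_insert hx]
      refine le_trans ?_ (v.map_add _ _)
      exact le_min (h a (mem_insert_self _ _)) (ih fun i hi => h i (mem_insert_of_mem hi))

lemma sz_sum_lt {ι : Type*} (s : Finset ι) (f : ι → L) (c : WithTop ℚ) (hc : c ≠ ⊤)
    (h : ∀ i ∈ s, c < v (f i)) : c < v (∑ i ∈ s, f i) := by
  classical
  induction s using Finset.induction_on with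
  | empty => simp only [Finset.sum_empty, v.map_zero]; exact lt_top_iff_ne_top.2 hc
  | @insert a s' hx ih =>
      rw [Finset.sum_insert hx]
      refine lt_of_lt_of_le ?_ (v.map_add _ _)
      exact lt_min (h a (mem_insert_self _ _)) (ih fun i hi => h i (mem_insert_of_mem hi))

omit [CharZero L] in
lemma sz_prod {ι : Type*} (s : Finset ι) (f : ι → L) :
    v (∏ i ∈ s, f i) = ∑ i ∈ s, v (f i) := by
  classical
  induction s using Finset.induction_on with
  | empty => simp [v.map_one]
  | @insert a s' hx ih =>
      rw [Finset.prod_insert hx, Finset.sum_insert hx, v.map_mul, ih]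

variable {p : ℕ}

lemma sz_unit (hp : p.Prime) (hvp : v (p : L) = ((1 : ℚ) : WithTop ℚ))
    {u : ℤ} (hu : ¬ (p : ℤ) ∣ u) : v (u : L) = 0 := by
  have hcop : IsCoprime (p : ℤ) u := (Nat.prime_iff_prime_int.mp hp).coprime_iff_not_dvd.mpr hu
  obtain ⟨a, b, hab⟩ := hcop
  by_contra hne
  have h0 : (0 : WithTop ℚ) < v (u : L) :=
    lt_of_le_of_ne (sz_int_nonneg v u) (Ne.symm hne)
  have h1 : ((a * p + b * u : ℤ) : L) = 1 := by rw [hab]; norm_num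
  have hv1 : v ((a * p + b * u : ℤ) : L) = 0 := by rw [h1, v.map_one]
  have hlt : (0 : WithTop ℚ) < v ((a * p + b * u : ℤ) : L) := by
    push_cast
    refine lt_of_lt_of_le ?_ (v.map_add _ _)
    refine lt_min ?_ ?_
    · rw [v.map_mul, hvp]
      calc (0 : WithTop ℚ) < ((1:ℚ) : WithTop ℚ) := by exact_mod_cast (by norm_num : (0:ℚ) < 1)
        _ ≤ v ((a:ℤ) : L) + ((1:ℚ) : WithTop ℚ) := le_add_of_nonneg_left (sz_int_nonneg v a)
    · rw [v.map_mul]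
      calc (0 : WithTop ℚ) < v ((u:ℤ) : L) := h0
        _ ≤ v ((b:ℤ) : L) + v ((u:ℤ) : L) := le_add_of_nonneg_left (sz_int_nonneg v b)
  rw [hv1] at hlt
  exact lt_irrefl _ hlt

lemma sz_val_int (hp : p.Prime) (hvp : v (p : L) = ((1 : ℚ) : WithTop ℚ))
    (m : ℤ) (hm : m ≠ 0) :
    v (m : L) = ((padicValInt p m : ℚ) : WithTop ℚ) := by
  haveI : Fact p.Prime := ⟨hp⟩
  set k := padicValInt p m with hk
  obtain ⟨u, hu⟩ := padicValInt_dvd (p := p) m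
  have hpu : ¬ (p : ℤ) ∣ u := by
    intro hd
    have h2 : (p : ℤ) ^ (k + 1) ∣ m := by
      rw [hu, pow_succ]
      exact mul_dvd_mul_left _ hd
    rcases (padicValInt_dvd_iff (p := p) (k+1) m).1 h2 with h | h
    · exact hm h
    · omega
  have : (m : L) = (p : L) ^ k * (u : L) := by rw [hu]; push_cast; ring
  rw [this, v.map_mul, v.map_pow, hvp, sz_unit v hp hvp hpu, sz_nsmul_coe]
  simp

lemma sz_dvd_iff (hp : p.Prime) (hvp : v (p : L) = ((1 : ℚ) : WithTop ℚ))
    (m : ℤ) (K : ℕ) :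
    (p : ℤ) ^ K ∣ m ↔ ((K : ℚ) : WithTop ℚ) ≤ v (m : L) := by
  haveI : Fact p.Prime := ⟨hp⟩
  rcases eq_or_ne m 0 with rfl | hm
  · simp [v.map_zero]
  · rw [sz_val_int v hp hvp m hm, padicValInt_dvd_iff]
    constructor
    · rintro (h | h)
      · exact absurd h hm
      · exact_mod_cast h
    · intro h
      right
      exact_mod_cast h

lemma sz_nat_dvd_le (a b : ℕ) (h : a ∣ b) : v ((a : ℕ) : L) ≤ v ((b : ℕ) : L) := by
  obtain ⟨d, rfl⟩ := h
  rw [Nat.cast_mul, v.map_mul]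
  exact le_add_of_nonneg_right (sz_nat_nonneg v d)

end Helpers

/-- Slope–divisibility criterion (Lemma 7.1 of Scholten–Zhu).  Let `q = p^ν` and let
`X/F_q` be a curve of genus `g` with Frobenius eigenvalues `π_1,…,π_{2g}` — algebraic
integers living in a field `L` equipped with an additive valuation `v` extending
`ord_p` (`v(p) = 1`, `v(π_i) ≥ 0`), being the roots of the reciprocal of an integral
polynomial `P ∈ Z[T]`, and with point counts `#X(F_{q^n}) = NX n` satisfying
`NX n = q^n + 1 - Σ_i π_i^n`.  For rational `0 ≤ λ ≤ 1/2`: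
`p^⌈νnλ⌉ ∣ q^n + 1 - #X(F_{q^n})` for all `n ≥ 1` iff `v(π_i) ≥ νλ` for all `i`
(i.e. the first Newton polygon slope is at least `λ`). -/
theorem stmt10 (p : ℕ) (hp : p.Prime) (ν g : ℕ) (hν : 0 < ν)
    (L : Type*) [Field L] [CharZero L]
    (v : AddValuation L (WithTop ℚ)) (hvp : v (p : L) = ((1 : ℚ) : WithTop ℚ))
    (π : Fin (2 * g) → L)
    (hπint : ∀ i, ((0 : ℚ) : WithTop ℚ) ≤ v (π i))
    (hP : ∃ P : Polynomial ℤ, P.map (Int.castRingHom L) =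
      ∏ i, (1 - Polynomial.C (π i) * Polynomial.X))
    (NX : ℕ → ℤ)
    (hNX : ∀ n : ℕ, 1 ≤ n → ((NX n : L) = (p : L) ^ (ν * n) + 1 - ∑ i, π i ^ n))
    (lam : ℚ) (hlam0 : 0 ≤ lam) (hlam : lam ≤ 1 / 2) :
    (∀ n : ℕ, 1 ≤ n →
        (p : ℤ) ^ (⌈((ν * n : ℕ) : ℚ) * lam⌉.toNat) ∣ ((p : ℤ) ^ (ν * n) + 1 - NX n)) ↔
      (∀ i, (((ν : ℚ) * lam : ℚ) : WithTop ℚ) ≤ v (π i)) := by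
  classical
  clear hP
  haveI : Fact p.Prime := ⟨hp⟩
  set c : ℚ := (ν : ℚ) * lam with hc
  have hc0 : 0 ≤ c := by positivity
  have hq : ∀ n : ℕ, 1 ≤ n →
      (((p:ℤ) ^ (ν*n) + 1 - NX n : ℤ) : L) = ∑ i, π i ^ n := by
    intro n hn
    have h := hNX n hn
    push_cast
    rw [h]; ring
  have hceil : ∀ n : ℕ, ((ν * n : ℕ) : ℚ) * lam = (n : ℚ) * c := by
    intro n; rw [hc]; push_cast; ring
  constructor
  · -- hard direction
    intro hdvd i
    -- power sum valuation bound
    have hs : ∀ n : ℕ, 1 ≤ n → (((n : ℚ) * c : ℚ) : WithTop ℚ) ≤ v (∑ j, π j ^ n) := by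
      intro n hn
      have h1 := (sz_dvd_iff v hp hvp _ _).1 (hdvd n hn)
      rw [hq n hn] at h1
      refine le_trans ?_ h1
      rw [WithTop.coe_le_coe]
      have h2 : ((ν * n : ℕ) : ℚ) * lam ≤ ((⌈((ν * n : ℕ) : ℚ) * lam⌉.toNat : ℕ) : ℚ) := by
        have h3 : (0:ℚ) ≤ ((ν * n : ℕ) : ℚ) * lam := by positivity
        have h4 : ((⌈((ν * n : ℕ) : ℚ) * lam⌉.toNat : ℤ) : ℚ) = ((⌈((ν * n : ℕ) : ℚ) * lam⌉ : ℤ) : ℚ) := by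
          exact_mod_cast Int.toNat_of_nonneg (Int.ceil_nonneg h3)
        rw [show ((⌈((ν * n : ℕ) : ℚ) * lam⌉.toNat : ℕ) : ℚ) = ((⌈((ν * n : ℕ) : ℚ) * lam⌉.toNat : ℤ) : ℚ) by push_cast; ring, h4]
        exact Int.le_ceil _
      calc (n : ℚ) * c = ((ν * n : ℕ) : ℚ) * lam := (hceil n).symm
        _ ≤ _ := h2
    by_contra hi
    push_neg at hi
    have hne : (univ : Finset (Fin (2*g))).Nonempty := ⟨i, mem_univ i⟩
    obtain ⟨i0, -, hi0⟩ := exists_mem_eq_inf' hne (fun j => v (π j))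
    have hμi : univ.inf' hne (fun j => v (π j)) ≤ v (π i) := inf'_le _ (mem_univ i)
    have hμc : univ.inf' hne (fun j => v (π j)) < ((c : ℚ) : WithTop ℚ) :=
      lt_of_le_of_lt hμi hi
    obtain ⟨m, hm⟩ := WithTop.ne_top_iff_exists.1 (ne_top_of_lt hμc)
    have hm0 : (0:ℚ) ≤ m := by
      have h := le_inf' hne (fun j => v (π j)) (fun j _ => hπint j)
      rw [← hm] at h; exact_mod_cast h
    have hmc : m < c := by rw [← hm] at hμc; exact_mod_cast hμc
    have hmin : ∀ j, ((m:ℚ) : WithTop ℚ) ≤ v (π j) := fun j => by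
      rw [hm]; exact inf'_le _ (mem_univ j)
    set T : Finset (Fin (2*g)) := univ.filter (fun j => v (π j) = ((m:ℚ):WithTop ℚ)) with hT
    have hTne : T.Nonempty := ⟨i0, by
      simp only [hT, mem_filter]
      exact ⟨mem_univ _, by rw [← hi0, ← hm]⟩⟩
    set t := T.card with ht
    have ht1 : 1 ≤ t := card_pos.2 hTne
    set V : ℚ := (padicValInt p (t.factorial : ℤ) : ℚ) with hV
    have hVval : v ((t.factorial : ℕ) : L) = ((V : ℚ) : WithTop ℚ) := by
      have hfz : ((t.factorial : ℤ)) ≠ 0 := by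
        exact_mod_cast t.factorial_ne_zero
      have h2 := sz_val_int v hp hvp (t.factorial : ℤ) hfz
      rw [show (((t.factorial : ℤ)) : L) = ((t.factorial : ℕ) : L) by push_cast; ring] at h2
      rw [h2]
    have key : ∀ N : ℕ, 1 ≤ N → (t:ℚ) * (N:ℚ) * (c - m) ≤ V := by
      intro N hN
      have hN0 : N ≠ 0 := by omega
      set E : ℕ → L := fun k => ∑ S ∈ powersetCard k univ, ∏ j ∈ S, π j ^ N with hE
      have hnewton : ∀ k : ℕ, (k : L) * E k =
          (-1)^(k+1) * ∑ a ∈ (antidiagonal k).filter (fun a => a.1 < k),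
            (-1)^a.1 * E a.1 * (∑ j, (π j ^ N) ^ a.2) := by
        intro k
        have h := congrArg (MvPolynomial.aeval (R := L) (fun j : Fin (2*g) => π j ^ N))
          (MvPolynomial.mul_esymm_eq_sum (Fin (2*g)) L k)
        simpa [MvPolynomial.esymm, MvPolynomial.psum, map_sum, map_prod, hE] using h
      have hneg : ∀ e : ℕ, v ((-1 : L)^e) = 0 := by
        intro e
        rw [v.map_pow, show v (-1 : L) = 0 from by rw [v.map_neg, v.map_one], smul_zero]
      have hEbound : ∀ k : ℕ, (((k:ℚ) * (N:ℚ) * c : ℚ) : WithTop ℚ) ≤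
          v ((k.factorial : ℕ) : L) + v (E k) := by
        intro k
        induction k using Nat.strong_induction_on with
        | _ k ih =>
        rcases Nat.eq_zero_or_pos k with rfl | hk
        · have hE0 : E 0 = 1 := by
            rw [hE]
            simp
          rw [hE0, v.map_one]
          norm_num
        · have hkf : ((k.factorial : ℕ) : L) = (((k-1).factorial : ℕ) : L) * (k : L) := by
            have h1 : k.factorial = (k-1).factorial * k := by
              cases k with
              | zero => omega
              | succ n => rw [Nat.factorial_succ, Nat.mul_comm]; simp
            rw [h1, Nat.cast_mul]
          have hchain : v ((k.factorial : ℕ) : L) + v (E k) =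
              v (∑ a ∈ (antidiagonal k).filter (fun a => a.1 < k),
                (((k-1).factorial : ℕ) : L) * ((-1)^a.1 * E a.1 * (∑ j, (π j ^ N) ^ a.2))) := by
            calc v ((k.factorial : ℕ) : L) + v (E k)
                = v ((((k-1).factorial : ℕ) : L)) + v ((k : L) * E k) := by
                  rw [hkf, v.map_mul, v.map_mul, add_assoc]
              _ = v ((((k-1).factorial : ℕ) : L)) +
                  v (∑ a ∈ (antidiagonal k).filter (fun a => a.1 < k),
                    (-1)^a.1 * E a.1 * (∑ j, (π j ^ N) ^ a.2)) := by
                  rw [hnewton k, v.map_mul, hneg, zero_add]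
              _ = _ := by rw [← v.map_mul, Finset.mul_sum]
          rw [hchain]
          refine sz_sum_le v _ _ _ ?_
          intro a ha
          obtain ⟨haa, ha2⟩ := mem_filter.1 ha
          have hak : a.1 + a.2 = k := mem_antidiagonal.1 haa
          have ha2pos : 1 ≤ a.2 := by omega
          have hfdvd : v ((a.1.factorial : ℕ) : L) ≤ v (((k-1).factorial : ℕ) : L) :=
            sz_nat_dvd_le v _ _ (Nat.factorial_dvd_factorial (by omega))
          have hihyp := ih a.1 (by omega)
          have hpsum : ((((N*a.2 : ℕ):ℚ) * c : ℚ) : WithTop ℚ) ≤ v (∑ j, (π j ^ N) ^ a.2) := by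
            have h3 := hs (N * a.2) (Nat.one_le_iff_ne_zero.mpr (Nat.mul_ne_zero hN0 (by omega)))
            simpa [← pow_mul] using h3
          calc (((k:ℚ) * (N:ℚ) * c : ℚ) : WithTop ℚ)
              = (((a.1:ℚ) * (N:ℚ) * c : ℚ) : WithTop ℚ) +
                ((((N*a.2 : ℕ):ℚ) * c : ℚ) : WithTop ℚ) := by
                rw [← WithTop.coe_add, WithTop.coe_eq_coe]
                have h4 : ((k:ℚ)) = (a.1:ℚ) + (a.2:ℚ) := by exact_mod_cast hak.symm
                have h5 : ((N*a.2 : ℕ):ℚ) = (N:ℚ) * (a.2:ℚ) := by push_cast; ring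
                rw [h4, h5]; ring
            _ ≤ (v ((a.1.factorial : ℕ) : L) + v (E a.1)) + v (∑ j, (π j ^ N) ^ a.2) :=
                add_le_add hihyp hpsum
            _ ≤ (v (((k-1).factorial : ℕ) : L) + v (E a.1)) + v (∑ j, (π j ^ N) ^ a.2) :=
                add_le_add (add_le_add hfdvd le_rfl) le_rfl
            _ = v ((((k-1).factorial : ℕ) : L) * ((-1)^a.1 * E a.1 * (∑ j, (π j ^ N) ^ a.2))) := by
                rw [v.map_mul, v.map_mul, v.map_mul, hneg, zero_add]
                exact add_assoc _ _ _
      have hTmem : T ∈ powersetCard t univ := mem_powersetCard_univ.2 rfl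
      have hvT : v (∏ j ∈ T, π j ^ N) = (((t:ℚ) * ((N:ℚ)*m) : ℚ) : WithTop ℚ) := by
        rw [sz_prod]
        have h5 : ∀ j ∈ T, v (π j ^ N) = ((((N:ℚ)*m) : ℚ) : WithTop ℚ) := by
          intro j hj
          rw [v.map_pow, (mem_filter.1 hj).2, sz_nsmul_coe]
        rw [Finset.sum_congr rfl h5, Finset.sum_const, ← ht, sz_nsmul_coe]
      have hrest : ∀ S ∈ (powersetCard t univ).erase T,
          (((t:ℚ) * ((N:ℚ)*m) : ℚ) : WithTop ℚ) < v (∏ j ∈ S, π j ^ N) := by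
        intro S hS
        obtain ⟨hSne, hSmem⟩ := mem_erase.1 hS
        have hScard : S.card = t := (mem_powersetCard_univ.1 hSmem)
        obtain ⟨j0, hj0S, hj0T⟩ : ∃ j0 ∈ S, j0 ∉ T := by
          by_contra hcon
          push_neg at hcon
          exact hSne (Finset.eq_of_subset_of_card_le hcon (by rw [hScard]))
        have hj0 : ((m:ℚ) : WithTop ℚ) < v (π j0) :=
          lt_of_le_of_ne (hmin j0)
            (fun hEq => hj0T (mem_filter.2 ⟨mem_univ _, hEq.symm⟩))
        rw [sz_prod, ← Finset.add_sum_erase _ _ hj0S]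
        have hb : (((((t:ℚ)-1) * ((N:ℚ)*m)) : ℚ) : WithTop ℚ) ≤
            ∑ j ∈ S.erase j0, v (π j ^ N) := by
          have hcard : ((S.erase j0).card : ℚ) = (t:ℚ) - 1 := by
            rw [Finset.card_erase_of_mem hj0S, hScard]
            have : (1:ℕ) ≤ t := ht1
            push_cast [Nat.cast_sub this]
            ring
          calc (((((t:ℚ)-1) * ((N:ℚ)*m)) : ℚ) : WithTop ℚ)
              = ∑ _j ∈ S.erase j0, ((((N:ℚ)*m) : ℚ) : WithTop ℚ) := by
                rw [Finset.sum_const, sz_nsmul_coe, WithTop.coe_eq_coe, hcard]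
            _ ≤ ∑ j ∈ S.erase j0, v (π j ^ N) := by
                refine Finset.sum_le_sum (fun j _ => ?_)
                rw [v.map_pow, show ((((N:ℚ)*m) : ℚ) : WithTop ℚ) = N • ((m:ℚ) : WithTop ℚ) from by
                  rw [sz_nsmul_coe]]
                exact nsmul_le_nsmul_right (hmin j) N
        have ha : ((((N:ℚ)*m) : ℚ) : WithTop ℚ) < v (π j0 ^ N) := by
          rw [v.map_pow]
          rcases eq_or_ne (v (π j0)) ⊤ with htop | hne2
          · rw [htop, sz_nsmul_top N hN0]
            exact WithTop.coe_lt_top _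
          · obtain ⟨q2, hq2⟩ := WithTop.ne_top_iff_exists.1 hne2
            rw [← hq2, sz_nsmul_coe, WithTop.coe_lt_coe]
            have hmq : m < q2 := by
              rw [← hq2] at hj0; exact_mod_cast hj0
            have hN1 : (1:ℚ) ≤ (N:ℚ) := by exact_mod_cast hN
            nlinarith
        calc (((t:ℚ) * ((N:ℚ)*m) : ℚ) : WithTop ℚ)
            = ((((N:ℚ)*m) : ℚ) : WithTop ℚ) + (((((t:ℚ)-1) * ((N:ℚ)*m)) : ℚ) : WithTop ℚ) := by
              rw [← WithTop.coe_add, WithTop.coe_eq_coe]; ring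
          _ < v (π j0 ^ N) + ∑ j ∈ S.erase j0, v (π j ^ N) :=
              WithTop.add_lt_add_of_lt_of_le (WithTop.coe_ne_top) ha hb
      have hEt : v (E t) = (((t:ℚ) * ((N:ℚ)*m) : ℚ) : WithTop ℚ) := by
        have hsum : E t = (∏ j ∈ T, π j ^ N) +
            ∑ S ∈ (powersetCard t univ).erase T, ∏ j ∈ S, π j ^ N := by
          rw [hE]
          exact (Finset.add_sum_erase _ _ hTmem).symm
        rw [hsum, v.map_add_eq_of_lt_left, hvT]
        rw [hvT]
        refine sz_sum_lt v _ _ _ (WithTop.coe_ne_top) hrest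
      have hfinal := hEbound t
      rw [hEt, hVval, ← WithTop.coe_add, WithTop.coe_le_coe] at hfinal
      nlinarith
    obtain ⟨N0, hN0⟩ := exists_nat_gt (V / ((t:ℚ) * (c - m)))
    have hpos : (0:ℚ) < (t:ℚ) * (c - m) := by
      have htq : (0:ℚ) < (t:ℚ) := by exact_mod_cast ht1
      nlinarith
    have h1 := key (max N0 1) (le_max_right _ _)
    have h2 : ((max N0 1 : ℕ) : ℚ) ≤ V / ((t:ℚ) * (c - m)) := by
      rw [le_div_iff₀ hpos]
      nlinarith
    have h3 : (N0 : ℚ) ≤ ((max N0 1 : ℕ) : ℚ) := by exact_mod_cast le_max_left N0 1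
    linarith
  · -- easy direction
    intro hsl n hn
    set S : ℤ := (p:ℤ) ^ (ν*n) + 1 - NX n with hSdef
    rcases eq_or_ne S 0 with h0 | h0
    · rw [h0]; exact dvd_zero _
    have hvS : (((n : ℚ) * c : ℚ) : WithTop ℚ) ≤ v (S : L) := by
      rw [show ((S : ℤ) : L) = ∑ j, π j ^ n from hq n hn]
      refine sz_sum_le v _ _ _ ?_
      intro j _
      rw [v.map_pow]
      calc (((n : ℚ) * c : ℚ) : WithTop ℚ) = n • ((c : ℚ) : WithTop ℚ) := by
            rw [sz_nsmul_coe]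
        _ ≤ n • v (π j) := nsmul_le_nsmul_right (hsl j) n
    have hval : v (S : L) = ((padicValInt p S : ℚ) : WithTop ℚ) := sz_val_int v hp hvp S h0
    rw [hval] at hvS
    have h1 : (n : ℚ) * c ≤ (padicValInt p S : ℚ) := by exact_mod_cast hvS
    have h2 : ⌈((ν * n : ℕ) : ℚ) * lam⌉.toNat ≤ padicValInt p S := by
      rw [Int.toNat_le, Int.ceil_le, hceil]
      exact_mod_cast h1
    exact dvd_trans (pow_dvd_pow _ h2) (padicValInt_dvd S)
end

section
/- Let p be a prime, q = p^ν, r = νn, and f(x) = Σ_{k=1}^d a_k x^k ∈ F_q[x]. Then the trace Tr_{F_{p^r}/F_p}(f(x)), viewed as a function of the coordinates x_1,…,x_r of x with respect to an F_p-basis of F_{p^r}, is a polynomial over F_p in x_1,…,x_r of total degree at most D = max{s_p(k) : a_k ≠ 0}. -/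
open MvPolynomial

/-- Sum of entries of a list via `getD` over `Finset.range`. -/
lemma list_getD_sum (l : List ℕ) : ∑ s ∈ Finset.range l.length, l.getD s 0 = l.sum := by
  induction l with
  | nil => simp
  | cons a l ih =>
      rw [List.length_cons, Finset.sum_range_succ']
      simp only [List.getD_cons_succ, List.getD_cons_zero, List.sum_cons, ih, add_comm]

/-- `ofDigits` as a finite sum. -/
lemma list_getD_ofDigits (p : ℕ) (l : List ℕ) :
    ∑ s ∈ Finset.range l.length, l.getD s 0 * p ^ s = Nat.ofDigits p l := by
  induction l with
  | nil => simp [Nat.ofDigits]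
  | cons a l ih =>
      rw [List.length_cons, Finset.sum_range_succ', Nat.ofDigits_cons, ← ih, Finset.mul_sum]
      simp only [List.getD_cons_succ, List.getD_cons_zero, pow_zero, mul_one, Nat.cast_id]
      rw [add_comm]
      congr 1
      exact Finset.sum_congr rfl fun s _ => by ring

/-- The trace `Tr_{F_{p^r}/F_p}(f(x))`, viewed as a function of the coordinates
`x_1,…,x_r` of `x` with respect to an `F_p`-basis of `F_{p^r}`, is (given by) a
polynomial over `F_p` in `x_1,…,x_r` of total degree at most
`D = max{s_p(k) : a_k ≠ 0}`, where `f = Σ_k a_k x^k`. -/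
theorem stmt12 (p r : ℕ) [hp : Fact p.Prime] (hr : 0 < r)
    (L : Type*) [Field L] [Fintype L] [Algebra (ZMod p) L]
    (hcard : Fintype.card L = p ^ r)
    (b : Module.Basis (Fin r) (ZMod p) L)
    (f : Polynomial L) (hf0 : f.coeff 0 = 0)
    (D : ℕ) (hD : ∀ k ∈ f.support, (Nat.digits p k).sum ≤ D) :
    ∃ P : MvPolynomial (Fin r) (ZMod p), P.totalDegree ≤ D ∧
      ∀ c : Fin r → ZMod p,
        MvPolynomial.eval c P =
          Algebra.trace (ZMod p) L (Polynomial.eval (∑ t, c t • b t) f) := by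
  classical
  haveI : CharP L p := (Algebra.charP_iff (ZMod p) L p).mp (ZMod.charP p)
  haveI : ExpChar L p := .prime hp.out
  -- iterated Frobenius is linear over ZMod p
  have key : ∀ (c : Fin r → ZMod p) (s : ℕ),
      (∑ t, c t • b t) ^ p ^ s = ∑ t, c t • (b t) ^ p ^ s := by
    intro c s
    have h := map_sum (iterateFrobenius L p s) (fun t => c t • b t) Finset.univ
    simp only [iterateFrobenius_def] at h
    rw [h]
    refine Finset.sum_congr rfl fun t _ => ?_
    rw [Algebra.smul_def, mul_pow, ← map_pow, ZMod.pow_card_pow, Algebra.smul_def]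
  -- the multivariate polynomial over L
  set Q : MvPolynomial (Fin r) L :=
    ∑ k ∈ f.support, C (f.coeff k) *
      ∏ s ∈ Finset.range (Nat.digits p k).length,
        (∑ t, C ((b t) ^ p ^ s) * X t) ^ ((Nat.digits p k).getD s 0) with hQ
  have hQdeg : Q.totalDegree ≤ D := by
    refine (totalDegree_finset_sum _ _).trans (Finset.sup_le fun k hk => ?_)
    refine (totalDegree_mul _ _).trans ?_
    rw [totalDegree_C, zero_add]
    refine le_trans ?_ (hD k hk)
    refine (totalDegree_finset_prod _ _).trans ?_
    calc ∑ s ∈ Finset.range (Nat.digits p k).length,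
          ((∑ t, C ((b t) ^ p ^ s) * X t) ^ ((Nat.digits p k).getD s 0)).totalDegree
        ≤ ∑ s ∈ Finset.range (Nat.digits p k).length, (Nat.digits p k).getD s 0 := by
          refine Finset.sum_le_sum fun s _ => ?_
          refine (totalDegree_pow _ _).trans ?_
          have h1 : (∑ t, C ((b t) ^ p ^ s) * X t : MvPolynomial (Fin r) L).totalDegree ≤ 1 := by
            refine (totalDegree_finset_sum _ _).trans (Finset.sup_le fun t _ => ?_)
            refine (totalDegree_mul _ _).trans ?_
            rw [totalDegree_C, totalDegree_X]
          calc (Nat.digits p k).getD s 0 *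
              (∑ t, C ((b t) ^ p ^ s) * X t : MvPolynomial (Fin r) L).totalDegree
              ≤ (Nat.digits p k).getD s 0 * 1 := Nat.mul_le_mul_left _ h1
            _ = _ := mul_one _
      _ = (Nat.digits p k).sum := list_getD_sum _
  have hQeval : ∀ c : Fin r → ZMod p,
      MvPolynomial.eval (fun t => algebraMap (ZMod p) L (c t)) Q
        = Polynomial.eval (∑ t, c t • b t) f := by
    intro c
    set x : L := ∑ t, c t • b t with hx
    rw [hQ, map_sum]
    rw [Polynomial.eval_eq_sum, Polynomial.sum_def]
    refine Finset.sum_congr rfl fun k hk => ?_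
    rw [map_mul, eval_C, map_prod]
    congr 1
    have hterm : ∀ s ∈ Finset.range (Nat.digits p k).length,
        MvPolynomial.eval (fun t => algebraMap (ZMod p) L (c t))
            ((∑ t, C ((b t) ^ p ^ s) * X t) ^ ((Nat.digits p k).getD s 0))
          = (x ^ p ^ s) ^ ((Nat.digits p k).getD s 0) := by
      intro s _
      rw [map_pow]
      congr 1
      rw [map_sum, key c s]
      refine Finset.sum_congr rfl fun t _ => ?_
      rw [map_mul, eval_C, eval_X, Algebra.smul_def, mul_comm]
    rw [Finset.prod_congr rfl hterm]
    have : ∀ s, (x ^ p ^ s) ^ ((Nat.digits p k).getD s 0)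
        = x ^ ((Nat.digits p k).getD s 0 * p ^ s) := by
      intro s; rw [mul_comm, pow_mul]
    simp only [this]
    rw [Finset.prod_pow_eq_pow_sum]
    rw [list_getD_ofDigits, Nat.ofDigits_digits]
  -- push trace through the coefficients
  refine ⟨∑ m ∈ Q.support, monomial m (Algebra.trace (ZMod p) L (Q.coeff m)), ?_, ?_⟩
  · refine (totalDegree_finset_sum _ _).trans (Finset.sup_le fun m hm => ?_)
    refine (totalDegree_monomial_le _ _).trans ?_
    exact le_trans (le_totalDegree hm) hQdeg
  · intro c
    rw [← hQeval c]
    conv_rhs => rw [← support_sum_monomial_coeff Q]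
    simp only [map_sum, eval_monomial]
    refine Finset.sum_congr rfl fun m _ => ?_
    have h1 : (m.prod fun n e => (fun t => algebraMap (ZMod p) L (c t)) n ^ e)
        = algebraMap (ZMod p) L (m.prod fun n e => c n ^ e) := by
      rw [map_finsuppProd]
      exact Finsupp.prod_congr fun n _ => by rw [map_pow]
    rw [h1, mul_comm (MvPolynomial.coeff m Q), ← Algebra.smul_def, LinearMap.map_smul, smul_eq_mul]
    exact mul_comm _ _
end

section
/- Fix d ≥ 2 and 0 ≤ k ≤ d-1 with gcd(k-1, d) = 1. Let f_k(A_0,…,A_{d-1}) ∈ Q[A_0,…,A_{d-1}] be obtained by writing the x^{Nd-k}-coefficient of (x^d + A_{d-1}x^{d-1}+…+A_0)^N as a polynomial in N with coefficients in Q[A_0,…,A_{d-1}] and evaluating at N = (k-1)/d. Then f_k is not the zero polynomial; indeed its coefficient of A_{d-1}^k equals the generalized binomial coefficient C((k-1)/d, k), which is nonzero. -/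
/-!
Only the summand `ℓ = k` of `f_k` contributes to the monomial `A_{d-1}^k`: the
`T^k`-coefficient of `(T h(T))^ℓ` is a form of degree `ℓ` in the `A_i`, and for `ℓ = k` it is
`h(0)^k = A_{d-1}^k`. So that coefficient is `C((k-1)/d, k)`, and each factor `(k-1)/d - j` is
nonzero because `(k-1)/d` is not an integer when `gcd(k-1, d) = 1` and `d ≥ 2`.
-/

open Polynomial

/-- The polynomial `f_k ∈ Q[A_0,…,A_{d-1}]`: evaluate the polynomial-in-`N` expression
`Σ_{ℓ=0}^k C(N,ℓ)·[(Th(T))^ℓ]_{T^k}` for the `x^{Nd-k}`-coefficient of `F(x)^N` at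
`N = (k-1)/d`, where `h(T) = A_{d-1} + A_{d-2}T + … + A_0T^{d-1}` and
`C(α,ℓ) = α(α-1)⋯(α-ℓ+1)/ℓ!` is the generalized binomial coefficient. -/
noncomputable def fk (d k : ℕ) : MvPolynomial (Fin d) ℚ :=
  ∑ ℓ ∈ Finset.range (k + 1),
    MvPolynomial.C ((∏ j ∈ Finset.range ℓ, (((k : ℚ) - 1) / (d : ℚ) - (j : ℚ))) /
        (Nat.factorial ℓ : ℚ)) *
      Polynomial.coeff
        ((Polynomial.X *
            ∑ i : Fin d, Polynomial.C (MvPolynomial.X i) *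
              Polynomial.X ^ (d - 1 - (i : ℕ))) ^ ℓ) k

section Homogeneous

variable {σ R : Type*} [CommSemiring R]

theorem Polynomial.isHomogeneous_coeff_pow {p : (MvPolynomial σ R)[X]}
    (hp : ∀ n, (p.coeff n).IsHomogeneous 1) (ℓ n : ℕ) :
    ((p ^ ℓ).coeff n).IsHomogeneous ℓ := by
  induction ℓ generalizing n with
  | zero =>
    rw [pow_zero, coeff_one]
    split
    · exact MvPolynomial.isHomogeneous_one σ R
    · exact MvPolynomial.isHomogeneous_zero σ R 0
  | succ ℓ ih =>
    rw [pow_succ, coeff_mul]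
    exact MvPolynomial.IsHomogeneous.sum _ _ _ fun x _ => (ih x.1).mul (hp x.2)

theorem Polynomial.isHomogeneous_coeff_sum_C_X_mul_X_pow {ι : Type*} (s : Finset ι)
    (x : ι → σ) (e : ι → ℕ) (n : ℕ) :
    MvPolynomial.IsHomogeneous
      ((∑ i ∈ s, C (MvPolynomial.X (x i)) * X ^ e i : (MvPolynomial σ R)[X]).coeff n) 1 := by
  rw [finsetSum_coeff]
  refine MvPolynomial.IsHomogeneous.sum _ _ _ fun i _ => ?_
  rw [coeff_C_mul, coeff_X_pow]
  split
  · simpa using MvPolynomial.isHomogeneous_X R (x i)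
  · simpa using MvPolynomial.isHomogeneous_zero σ R 1

theorem Polynomial.coeff_X_mul_pow_self (p : R[X]) (k : ℕ) :
    ((X * p) ^ k).coeff k = p.coeff 0 ^ k := by
  rw [mul_pow, coeff_X_pow_mul', if_pos le_rfl, Nat.sub_self, coeff_zero_eq_eval_zero,
    coeff_zero_eq_eval_zero, eval_pow]

theorem Polynomial.coeff_single_sum_C_mul_coeff_X_mul_pow [DecidableEq σ]
    {p : (MvPolynomial σ R)[X]}
    (hp : ∀ n, (p.coeff n).IsHomogeneous 1) {v : σ} (hv : p.coeff 0 = MvPolynomial.X v)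
    (c : ℕ → R) (k : ℕ) :
    MvPolynomial.coeff (Finsupp.single v k)
        (∑ ℓ ∈ Finset.range (k + 1), MvPolynomial.C (c ℓ) * ((X * p) ^ ℓ).coeff k) =
      c k := by
  have h_lt : ∀ ℓ ∈ Finset.range k, MvPolynomial.coeff (Finsupp.single v k)
      (MvPolynomial.C (c ℓ) * ((X * p) ^ ℓ).coeff k) = 0 := by
    intro ℓ hℓ
    have hℓk : ℓ < k := Finset.mem_range.1 hℓ
    have hdeg : (Finsupp.single v k).degree ≠ ℓ := by rw [Finsupp.degree_single]; omega
    rw [MvPolynomial.coeff_C_mul, mul_pow, coeff_X_pow_mul', if_pos hℓk.le,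
      (isHomogeneous_coeff_pow hp ℓ (k - ℓ)).coeff_eq_zero hdeg, mul_zero]
  rw [MvPolynomial.coeff_sum, Finset.sum_range_succ, Finset.sum_eq_zero h_lt, zero_add,
    MvPolynomial.coeff_C_mul, coeff_X_mul_pow_self, hv, MvPolynomial.X_pow_eq_monomial,
    MvPolynomial.coeff_monomial, if_pos rfl, mul_one]

end Homogeneous

theorem prod_range_intCast_div_sub_ne_zero {a : ℤ} {d : ℕ} (hd : 2 ≤ d) (ha : Int.gcd a d = 1)
    (k : ℕ) : ∏ j ∈ Finset.range k, ((a : ℚ) / d - j) ≠ 0 := by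
  refine Finset.prod_ne_zero_iff.2 fun j _ hj => ?_
  have hdj : (a : ℚ) = j * d := (div_eq_iff (by positivity)).1 (sub_eq_zero.1 hj)
  have hdvd : (d : ℤ) ∣ a := ⟨j, by rw [mul_comm]; exact_mod_cast hdj⟩
  have := Int.le_of_dvd one_pos (ha ▸ Int.dvd_coe_gcd hdvd dvd_rfl : (d : ℤ) ∣ (1 : ℕ))
  omega

theorem coeff_fk_single (d k : ℕ) (hd : 2 ≤ d) :
    MvPolynomial.coeff (Finsupp.single (⟨d - 1, by omega⟩ : Fin d) k) (fk d k) =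
      (∏ j ∈ Finset.range k, (((k : ℚ) - 1) / (d : ℚ) - (j : ℚ))) /
        (Nat.factorial k : ℚ) := by
  refine coeff_single_sum_C_mul_coeff_X_mul_pow
    (isHomogeneous_coeff_sum_C_X_mul_X_pow _ _ _) ?_ _ k
  rw [finsetSum_coeff, Finset.sum_eq_single ⟨d - 1, by omega⟩]
  · simp
  · intro i _ hi
    rw [coeff_C_mul, coeff_X_pow, if_neg, mul_zero]
    have := i.isLt
    have : (i : ℕ) ≠ d - 1 := fun h => hi (Fin.ext h)
    omega
  · simp

/-- Lemma 8.2 (second part): for `2 ≤ d`, `0 ≤ k ≤ d-1` with `gcd(k-1,d) = 1`, the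
polynomial `f_k` is nonzero; indeed its coefficient at the monomial `A_{d-1}^k` is the
generalized binomial coefficient `C((k-1)/d, k)`, which is nonzero. -/
theorem stmt14 (d k : ℕ) (hd : 2 ≤ d)
    (hgcd : Int.gcd ((k : ℤ) - 1) (d : ℤ) = 1) :
    fk d k ≠ 0 ∧
    MvPolynomial.coeff (Finsupp.single (⟨d - 1, by omega⟩ : Fin d) k) (fk d k) =
      (∏ j ∈ Finset.range k, (((k : ℚ) - 1) / (d : ℚ) - (j : ℚ))) / (Nat.factorial k : ℚ) ∧
    (∏ j ∈ Finset.range k, (((k : ℚ) - 1) / (d : ℚ) - (j : ℚ))) / (Nat.factorial k : ℚ) ≠ 0 := by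
  have hC : (∏ j ∈ Finset.range k, (((k : ℚ) - 1) / (d : ℚ) - (j : ℚ))) /
      (Nat.factorial k : ℚ) ≠ 0 := by
    refine div_ne_zero ?_ (by positivity)
    exact_mod_cast prod_range_intCast_div_sub_ne_zero hd hgcd k
  have hcoeff := coeff_fk_single d k hd
  refine ⟨fun h0 => hC ?_, hcoeff, hC⟩
  rw [← hcoeff, h0, MvPolynomial.coeff_zero]
end

section
/- Fix d ≥ 2 and 0 ≤ k ≤ d-1 with gcd(k-1,d) = 1, and let f = x^d + a_{d-1}x^{d-1} + … + a_0 ∈ Z[x] (or with p-integral rational coefficients). For a prime p = Nd - k + 1 > d, the coefficient of x^{p-1} in f^⌈(p-1)/d⌉ is congruent modulo p to f_k(a_0,…,a_{d-1}), where f_k is the polynomial in Q[A_0,…,A_{d-1}] obtained by evaluating the polynomial-in-N expression for [F(x)^N]_{x^{Nd-k}} at N = (k-1)/d. -/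
open Polynomial Finset

private lemma reflect_pow_aux {R : Type*} [CommSemiring R] (f : R[X]) (n : ℕ)
    (hf : f.natDegree ≤ n) (ℓ : ℕ) :
    (reflect n f) ^ ℓ = reflect (n * ℓ) (f ^ ℓ) := by
  induction ℓ with
  | zero => simp
  | succ m ih =>
      have hpow : (f ^ m).natDegree ≤ n * m :=
        (natDegree_pow_le).trans (by rw [mul_comm n m]; exact Nat.mul_le_mul_left m hf)
      rw [pow_succ, ih, Nat.mul_succ, ← reflect_mul (f ^ m) f hpow hf, ← pow_succ]

private lemma reflect_sum_aux {R : Type*} [CommSemiring R] {ι : Type*} (s : Finset ι)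
    (f : ι → R[X]) (n : ℕ) :
    reflect n (∑ i ∈ s, f i) = ∑ i ∈ s, reflect n (f i) := by
  induction s using Finset.cons_induction with
  | empty => simp
  | cons i s hi ih => rw [Finset.sum_cons, Finset.sum_cons, reflect_add, ih]

private lemma choose_cast_eq (p : ℕ) [Fact p.Prime] (N ℓ : ℕ) (hl : ℓ < p) :
    ((N.choose ℓ : ℕ) : ZMod p) =
      (∏ j ∈ Finset.range ℓ, ((N : ZMod p) - (j : ZMod p))) *
        (Nat.factorial ℓ : ZMod p)⁻¹ := by
  have pp : p.Prime := Fact.out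
  have hfac : (Nat.factorial ℓ : ZMod p) ≠ 0 := by
    rw [Ne, ZMod.natCast_eq_zero_iff]
    intro hdvd
    exact absurd ((Nat.Prime.dvd_factorial pp).mp hdvd) (by omega)
  rw [eq_mul_inv_iff_mul_eq₀ hfac, ← Nat.cast_mul, mul_comm (N.choose ℓ),
    ← Nat.descFactorial_eq_factorial_mul_choose]
  by_cases hN : ℓ ≤ N
  · rw [Nat.descFactorial_eq_prod_range, Nat.cast_prod]
    refine (Finset.prod_congr rfl fun j hj => ?_)
    rw [← Nat.cast_sub (by have := Finset.mem_range.mp hj; omega)]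
  · rw [Nat.descFactorial_eq_zero_iff_lt.mpr (by omega), Nat.cast_zero]
    exact (Finset.prod_eq_zero (i := N) (Finset.mem_range.mpr (by omega)) (show ((N : ZMod p) - (N : ZMod p) : ZMod p) = 0 from sub_self _)).symm

/-- Lemma 8.2 (congruence part): for `2 ≤ d`, `0 ≤ k ≤ d-1` with `gcd(k-1,d)=1`, a
prime `p = Nd - k + 1 > d` (so `N = ⌈(p-1)/d⌉`), and `f = x^d + a_{d-1}x^{d-1} + … + a_0`
monic of degree `d` over `Z`, the `x^{p-1}`-coefficient of `f^N` is congruent mod `p` to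
`f_k(a_0,…,a_{d-1})`, computed in `Z/p` as
`Σ_{ℓ=0}^k C((k-1)/d, ℓ)·[(T·h(T))^ℓ]_{T^k}` with `h(T) = a_{d-1} + … + a_0T^{d-1}`
and the generalized binomial coefficient evaluated at `(k-1)/d ∈ Z/p`. -/
theorem stmt15 (d k N : ℕ) (hd : 2 ≤ d) (hk : k ≤ d - 1) (hN : 1 ≤ N)
    (hgcd : Int.gcd ((k : ℤ) - 1) (d : ℤ) = 1)
    (p : ℕ) (hp : p = N * d - k + 1) (hpp : p.Prime) (hpd : d < p)
    (f : Polynomial ℤ) (hf : f.Monic) (hdeg : f.natDegree = d) :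
    (((f ^ N).coeff (p - 1) : ℤ) : ZMod p) =
      ∑ ℓ ∈ Finset.range (k + 1),
        (∏ j ∈ Finset.range ℓ,
            (((k : ZMod p) - 1) * (d : ZMod p)⁻¹ - (j : ZMod p))) *
          (Nat.factorial ℓ : ZMod p)⁻¹ *
          Polynomial.coeff
            ((Polynomial.X *
                ∑ i ∈ Finset.range d,
                  Polynomial.C ((f.coeff i : ZMod p)) * Polynomial.X ^ (d - 1 - i)) ^ ℓ) k := by
  haveI : Fact p.Prime := ⟨hpp⟩
  have hNd : k + d ≤ N * d := by omega
  have hdN : d * N = N * d := Nat.mul_comm d N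
  set a : ℕ → (ZMod p) := fun i => ((f.coeff i : ℤ) : (ZMod p)) with ha
  set G : (ZMod p)[X] := ∑ i ∈ Finset.range d, C (a i) * X ^ i with hGdef
  set h : (ZMod p)[X] := ∑ i ∈ Finset.range d, C (a i) * X ^ (d - 1 - i) with hhdef
  set F : (ZMod p)[X] := f.map (Int.castRingHom (ZMod p)) with hFdef
  have hGc : ∀ n, G.coeff n = if n < d then a n else 0 := by
    intro n
    rw [hGdef, finset_sum_coeff]
    simp only [coeff_C_mul, coeff_X_pow, mul_ite, mul_one, mul_zero]
    rw [Finset.sum_ite_eq (Finset.range d) n a]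
    simp [Finset.mem_range]
  have hGdeg : G.natDegree ≤ d - 1 := by
    refine natDegree_sum_le_of_forall_le _ _ fun i hi => ?_
    exact (natDegree_C_mul_X_pow_le (a i) i).trans
      (by have := Finset.mem_range.mp hi; omega)
  have hhdeg : h.natDegree ≤ d - 1 := by
    refine natDegree_sum_le_of_forall_le _ _ fun i hi => ?_
    exact (natDegree_C_mul_X_pow_le (a i) (d - 1 - i)).trans (by omega)
  have hFG : F = X ^ d + G := by
    ext n
    rw [hFdef, coeff_map, coeff_add, coeff_X_pow, hGc]
    rcases lt_trichotomy n d with hlt | heq | hgt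
    · rw [if_neg (by omega), if_pos hlt, zero_add]; rfl
    · subst heq
      rw [if_pos rfl, if_neg (by omega), add_zero]
      have h1 : f.coeff n = 1 := by
        have := hf.coeff_natDegree
        rwa [hdeg] at this
      simp [h1]
    · rw [if_neg (by omega), if_neg (by omega), add_zero]
      have h0 : f.coeff n = 0 := coeff_eq_zero_of_natDegree_lt (by omega)
      simp [h0]
  have hh : h = reflect (d - 1) G := by
    rw [hhdef, hGdef, reflect_sum_aux]
    refine Finset.sum_congr rfl fun i hi => ?_
    rw [reflect_C_mul_X_pow, revAt_le (by have := Finset.mem_range.mp hi; omega)]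
  -- key per-term identity
  have key : ∀ ℓ, ℓ ≤ N →
      (G ^ ℓ * (X ^ d) ^ (N - ℓ)).coeff (N * d - k) = ((X * h) ^ ℓ).coeff k := by
    intro ℓ hℓ
    have hds : d * (N - ℓ) + d * ℓ = d * N := by
      rw [← Nat.mul_add, Nat.sub_add_cancel hℓ]
    have hldl : ℓ ≤ d * ℓ := Nat.le_mul_of_pos_left ℓ (by omega)
    rw [← pow_mul, coeff_mul_X_pow']
    by_cases hc : k ≤ d * ℓ
    · rw [if_pos (by omega)]
      have harg : N * d - k - d * (N - ℓ) = d * ℓ - k := by omega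
      rw [harg, mul_pow, coeff_X_pow_mul']
      by_cases hlk : ℓ ≤ k
      · rw [if_pos hlk, hh, reflect_pow_aux G (d - 1) hGdeg ℓ, coeff_reflect]
        have hdl1 : (d - 1) * ℓ = d * ℓ - ℓ := by rw [tsub_mul, one_mul]
        rw [revAt_le (by omega)]
        congr 1
        omega
      · rw [if_neg hlk]
        apply coeff_eq_zero_of_natDegree_lt
        have h1 : (G ^ ℓ).natDegree ≤ ℓ * (d - 1) :=
          natDegree_pow_le.trans (Nat.mul_le_mul_left ℓ hGdeg)
        have h2 : ℓ * (d - 1) = ℓ * d - ℓ := by rw [Nat.mul_sub, Nat.mul_one]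
        have h3 : ℓ * d = d * ℓ := Nat.mul_comm ℓ d
        omega
    · rw [if_neg (by omega)]
      symm
      apply coeff_eq_zero_of_natDegree_lt
      have h1 : (X * h).natDegree ≤ d :=
        natDegree_mul_le.trans (by
          have := natDegree_X_le (R := ZMod p); omega)
      have h2 : ((X * h) ^ ℓ).natDegree ≤ ℓ * d :=
        natDegree_pow_le.trans (Nat.mul_le_mul_left ℓ h1)
      have h3 : ℓ * d = d * ℓ := Nat.mul_comm ℓ d
      omega
  -- cast of the LHS
  have hcast : (((f ^ N).coeff (p - 1) : ℤ) : (ZMod p)) = (F ^ N).coeff (N * d - k) := by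
    rw [hFdef, ← Polynomial.map_pow, coeff_map]
    have : p - 1 = N * d - k := by omega
    rw [this]
    rfl
  rw [hcast, hFG, add_comm (X ^ d) G, add_pow, finset_sum_coeff]
  have step1 : ∀ ℓ ∈ Finset.range (N + 1),
      (G ^ ℓ * (X ^ d) ^ (N - ℓ) * (N.choose ℓ : (ZMod p)[X])).coeff (N * d - k) =
        ((X * h) ^ ℓ).coeff k * (N.choose ℓ : (ZMod p)) := by
    intro ℓ hℓ
    rw [← Polynomial.C_eq_natCast, coeff_mul_C, key ℓ (by
      have := Finset.mem_range.mp hℓ; omega)]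
  rw [Finset.sum_congr rfl step1]
  -- switch range from N+1 to k+1
  set t : ℕ → (ZMod p) := fun ℓ => ((X * h) ^ ℓ).coeff k * (N.choose ℓ : (ZMod p)) with ht
  have hvan : ∀ ℓ, k < ℓ → t ℓ = 0 := by
    intro ℓ hℓ
    rw [ht]
    simp only
    rw [mul_pow, coeff_X_pow_mul', if_neg (by omega), zero_mul]
  have hvan2 : ∀ ℓ, N < ℓ → t ℓ = 0 := by
    intro ℓ hℓ
    rw [ht]
    simp only
    rw [Nat.choose_eq_zero_of_lt hℓ, Nat.cast_zero, mul_zero]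
  have hswap : ∑ ℓ ∈ Finset.range (N + 1), t ℓ = ∑ ℓ ∈ Finset.range (k + 1), t ℓ := by
    have e1 : ∑ ℓ ∈ Finset.range (N + 1), t ℓ = ∑ ℓ ∈ Finset.range (max N k + 1), t ℓ :=
      Finset.sum_subset (Finset.range_subset_range.mpr (by omega))
        (fun x _ hx => hvan2 x (by simp only [Finset.mem_range] at hx; omega))
    have e2 : ∑ ℓ ∈ Finset.range (k + 1), t ℓ = ∑ ℓ ∈ Finset.range (max N k + 1), t ℓ :=
      Finset.sum_subset (Finset.range_subset_range.mpr (by omega))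
        (fun x _ hx => hvan x (by simp only [Finset.mem_range] at hx; omega))
    rw [e1, ← e2]
  rw [hswap]
  -- final per-term identity for ℓ ≤ k
  have hdne : (d : (ZMod p)) ≠ 0 := by
    rw [Ne, ZMod.natCast_eq_zero_iff]
    intro hdvd
    have := Nat.le_of_dvd (by omega) hdvd
    omega
  have hNdR : (N : (ZMod p)) * (d : (ZMod p)) = (k : (ZMod p)) - 1 := by
    have hnat : N * d = (p - 1) + k := by omega
    have hc2 : ((N * d : ℕ) : (ZMod p)) = (((p - 1) + k : ℕ) : (ZMod p)) := by rw [hnat]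
    rw [Nat.cast_mul, Nat.cast_add, Nat.cast_sub (by omega), Nat.cast_one,
      ZMod.natCast_self, zero_sub] at hc2
    rw [hc2]
    ring
  have hNR : (N : (ZMod p)) = ((k : (ZMod p)) - 1) * (d : (ZMod p))⁻¹ := by
    rw [eq_mul_inv_iff_mul_eq₀ hdne]
    exact hNdR
  refine Finset.sum_congr rfl fun ℓ hℓ => ?_
  have hℓk : ℓ ≤ k := by have := Finset.mem_range.mp hℓ; omega
  have hbin : (N.choose ℓ : (ZMod p)) =
      (∏ j ∈ Finset.range ℓ, (((k : (ZMod p)) - 1) * (d : (ZMod p))⁻¹ - (j : (ZMod p)))) *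
        (Nat.factorial ℓ : (ZMod p))⁻¹ := by
    rw [← hNR]
    exact choose_cast_eq p N ℓ (by omega)
  rw [ht]
  simp only
  rw [hbin]
  ring
end
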